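/- arXiv:2409.20322 — 6 statements merged into one kernel-verified Lean document; each statement's English description precedes it below -/
import Mathlib

section
/- For every z ∈ K with ‖z − 1‖ < 1 there exists a unique continuous function χ : ℤ_p → K such that χ(x + y) = χ(x)·χ(y) for all x, y ∈ ℤ_p and χ(1) = z. (This is the character g ↦ z^g, defined on integers by powers of z and extended to ℤ_p by continuity.) -/
open IsUltrametricDist Filter Topology

private lemma aux_pow_sub_one_le {K : Type*} [NormedField K] [IsUltrametricDist K]
    {w : K} (hw : ‖w‖ ≤ 1) (n : ℕ) : ‖w ^ n - 1‖ ≤ ‖w - 1‖ := by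
  induction n with
  | zero => simpa using norm_nonneg _
  | succ n ih =>
      have heq : w ^ (n + 1) - 1 = w ^ n * (w - 1) + (w ^ n - 1) := by ring
      rw [heq]
      refine (norm_add_le_max _ _).trans (max_le ?_ ih)
      rw [norm_mul]
      calc ‖w ^ n‖ * ‖w - 1‖ ≤ 1 * ‖w - 1‖ := by
            gcongr
            simpa using pow_le_one₀ (norm_nonneg w) hw
        _ = ‖w - 1‖ := one_mul _

private lemma aux_pow_p_sub_one (p : ℕ) [Fact p.Prime] {K : Type*} [NormedField K]
    [IsUltrametricDist K] (hpK : ‖(p : K)‖ ≤ (p : ℝ)⁻¹) (hK : ∀ n : ℕ, ‖(n : K)‖ ≤ 1)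
    {w : K} (hw : ‖w - 1‖ ≤ 1) :
    ‖w ^ p - 1‖ ≤ ‖w - 1‖ * max (p : ℝ)⁻¹ ‖w - 1‖ := by
  have hp : p.Prime := Fact.out
  set s := w - 1 with hs
  have hw_eq : w ^ p - 1 = ∑ i ∈ Finset.Ico 1 (p + 1), s ^ i * (p.choose i : K) := by
    have h1 : w = s + 1 := by rw [hs]; ring
    have h2 := add_pow s 1 p
    simp only [one_pow, mul_one] at h2
    rw [h1, h2]
    rw [Finset.range_eq_Ico,
      Finset.sum_eq_sum_Ico_succ_bot (by omega : 0 < p + 1) (fun i => s ^ i * (p.choose i : K))]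
    simp
  rw [hw_eq]
  refine norm_sum_le_of_forall_le_of_nonneg
    (mul_nonneg (norm_nonneg _) (le_max_of_le_left (by positivity))) ?_
  intro i hi
  rw [Finset.mem_Ico] at hi
  obtain ⟨hi1, hi2⟩ := hi
  rw [norm_mul, norm_pow]
  rcases eq_or_lt_of_le (Nat.lt_succ_iff.mp hi2) with hip | hip
  · -- i = p
    rw [hip, Nat.choose_self, Nat.cast_one, norm_one, mul_one]
    calc ‖s‖ ^ p = ‖s‖ * ‖s‖ ^ (p - 1) := by
          rw [← pow_succ']
          congr 1
          omega
      _ ≤ ‖s‖ * ‖s‖ := by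
          refine mul_le_mul_of_nonneg_left ?_ (norm_nonneg _)
          have h2p := hp.two_le
          simpa using pow_le_pow_of_le_one (norm_nonneg _) hw (by omega : 1 ≤ p - 1)
      _ ≤ ‖s‖ * max (p:ℝ)⁻¹ ‖s‖ :=
          mul_le_mul_of_nonneg_left (le_max_right _ _) (norm_nonneg _)
  · -- 1 ≤ i < p : p ∣ choose
    obtain ⟨m, hm⟩ := hp.dvd_choose_self (by omega) hip
    have hcnorm : ‖(p.choose i : K)‖ ≤ (p:ℝ)⁻¹ := by
      rw [hm, Nat.cast_mul, norm_mul]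
      calc ‖(p:K)‖ * ‖(m:K)‖ ≤ (p:ℝ)⁻¹ * 1 := by
            gcongr
            exact hK m
        _ = (p:ℝ)⁻¹ := mul_one _
    have hsi : ‖s‖ ^ i ≤ ‖s‖ := by
      simpa using pow_le_pow_of_le_one (norm_nonneg _) hw hi1
    calc ‖s‖ ^ i * ‖(p.choose i : K)‖ ≤ ‖s‖ * (p:ℝ)⁻¹ :=
          mul_le_mul hsi hcnorm (norm_nonneg _) (norm_nonneg _)
      _ ≤ ‖s‖ * max (p:ℝ)⁻¹ ‖s‖ :=
          mul_le_mul_of_nonneg_left (le_max_left _ _) (norm_nonneg _)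

/-- For every `z ∈ K` with `‖z - 1‖ < 1` there is a unique continuous
character `χ : ℤ_p → K` with `χ 1 = z` (the character `g ↦ z^g`). -/
theorem exists_unique_continuous_character_of_norm_sub_one_lt
    (p : ℕ) [Fact p.Prime]
    (K : Type*) [NormedField K] [CompleteSpace K] [IsUltrametricDist K]
    [NormedAlgebra ℚ_[p] K]
    (hnorm : ∀ x : ℚ_[p], ‖algebraMap ℚ_[p] K x‖ = ‖x‖)
    (z : K) (hz : ‖z - 1‖ < 1) :
    ∃! χ : ℤ_[p] → K,
      Continuous χ ∧ (∀ x y : ℤ_[p], χ (x + y) = χ x * χ y) ∧ χ 1 = z := by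
  have hp : p.Prime := Fact.out
  have hp1 : (1:ℝ) < p := by exact_mod_cast hp.one_lt
  have hp0 : (0:ℝ) < p := by linarith
  -- norms of rationals in K
  have hnat : ∀ n : ℕ, ‖(n : K)‖ ≤ 1 := by
    intro n
    rw [← map_natCast (algebraMap ℚ_[p] K) n, hnorm]
    have := Padic.norm_int_le_one (p := p) (n : ℤ)
    push_cast at this
    exact this
  have hpK : ‖(p : K)‖ = (p:ℝ)⁻¹ := by
    rw [← map_natCast (algebraMap ℚ_[p] K) p, hnorm]
    exact Padic.norm_p
  -- ‖z‖ = 1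
  have hz1 : ‖z‖ = 1 := by
    have h1 : ‖z‖ ≤ 1 := by
      have := norm_add_le_max (z - 1) 1
      simpa using this.trans (max_le hz.le (le_of_eq norm_one))
    rcases eq_or_lt_of_le h1 with h | h
    · exact h
    · exfalso
      have := norm_add_le_max (1 - z) z
      simp only [sub_add_cancel, norm_one] at this
      rw [norm_sub_rev] at hz
      exact absurd (this.trans_lt (max_lt hz h)) (lt_irrefl 1)
  -- the common ratio
  set q : ℝ := max (p:ℝ)⁻¹ ‖z - 1‖ with hq_def
  have hq0 : 0 ≤ q := le_max_of_le_left (by positivity)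
  have hq1 : q < 1 := max_lt (by rw [inv_lt_one_iff₀]; right; exact hp1) hz
  -- powers of z^(p^k)
  have hpowpow : ∀ k : ℕ, ‖z ^ (p ^ k) - 1‖ ≤ ‖z - 1‖ * q ^ k := by
    intro k
    induction k with
    | zero => simp
    | succ k ih =>
        have hwle : ‖z ^ (p ^ k) - 1‖ ≤ 1 := by
          refine ih.trans ?_
          calc ‖z - 1‖ * q ^ k ≤ 1 * 1 := by
                refine mul_le_mul hz.le (pow_le_one₀ hq0 hq1.le) (by positivity) zero_le_one
            _ = 1 := one_mul _
        have hb := aux_pow_p_sub_one p (le_of_eq hpK) hnat hwle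
        rw [← pow_mul, ← pow_succ] at hb
        refine hb.trans ?_
        have hmax : max (p:ℝ)⁻¹ ‖z ^ (p ^ k) - 1‖ ≤ q := by
          refine max_le (le_max_left _ _) ?_
          refine ih.trans ?_
          calc ‖z - 1‖ * q ^ k ≤ ‖z - 1‖ * 1 :=
                mul_le_mul_of_nonneg_left (pow_le_one₀ hq0 hq1.le) (norm_nonneg _)
            _ = ‖z - 1‖ := mul_one _
            _ ≤ q := le_max_right _ _
        calc ‖z ^ (p ^ k) - 1‖ * max (p:ℝ)⁻¹ ‖z ^ (p ^ k) - 1‖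
            ≤ (‖z - 1‖ * q ^ k) * q := mul_le_mul ih hmax (by positivity) (by positivity)
          _ = ‖z - 1‖ * q ^ (k + 1) := by ring
  -- key estimate for natural powers
  have hstep : ∀ (k m n : ℕ), ‖((m : ℤ_[p]) - (n : ℤ_[p]))‖ ≤ (p:ℝ) ^ (-(k:ℤ)) →
      ‖z ^ m - z ^ n‖ ≤ ‖z - 1‖ * q ^ k := by
    have key : ∀ (k m n : ℕ), n ≤ m → ‖((m : ℤ_[p]) - (n : ℤ_[p]))‖ ≤ (p:ℝ) ^ (-(k:ℤ)) →
        ‖z ^ m - z ^ n‖ ≤ ‖z - 1‖ * q ^ k := by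
      intro k m n hnm h
      have hdvd : (p ^ k : ℤ) ∣ ((m : ℤ) - (n : ℤ)) := by
        rw [← PadicInt.norm_int_le_pow_iff_dvd]
        push_cast
        exact h
      have hdvd' : p ^ k ∣ m - n := by
        have : ((m - n : ℕ) : ℤ) = (m : ℤ) - (n : ℤ) := by
          push_cast [Nat.cast_sub hnm]; ring
        exact_mod_cast this ▸ hdvd
      obtain ⟨d, hd⟩ := hdvd'
      have hm : m = n + p ^ k * d := by omega
      have heq : z ^ m - z ^ n = z ^ n * ((z ^ (p ^ k)) ^ d - 1) := by
        rw [hm, pow_add, ← pow_mul]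
        ring
      rw [heq, norm_mul, norm_pow, hz1, one_pow, one_mul]
      have hwnorm : ‖z ^ (p ^ k)‖ ≤ 1 := by rw [norm_pow, hz1, one_pow]
      exact (aux_pow_sub_one_le hwnorm d).trans (hpowpow k)
    intro k m n h
    rcases le_total n m with hnm | hnm
    · exact key k m n hnm h
    · rw [norm_sub_rev]
      rw [norm_sub_rev] at h
      exact key k n m hnm h
  -- approximations
  have happr : ∀ (g : ℤ_[p]) (l : ℕ), ‖g - g.appr l‖ ≤ (p:ℝ) ^ (-(l:ℤ)) := fun g l =>
    (PadicInt.norm_le_pow_iff_mem_span_pow _ l).mpr (g.appr_spec l)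
  have hmono : ∀ k l : ℕ, k ≤ l → ((p:ℝ) ^ (-(l:ℤ)) ≤ (p:ℝ) ^ (-(k:ℤ))) := by
    intro k l hkl
    exact zpow_le_zpow_right₀ hp1.le (by omega)
  have htri : ∀ a b c : ℤ_[p], ‖a - c‖ ≤ max ‖a - b‖ ‖b - c‖ := by
    intro a b c
    have := norm_add_le_max (a - b) (b - c)
    simpa using this
  -- the sequence
  set seq : ℤ_[p] → ℕ → K := fun g l => z ^ (g.appr l) with hseq_def
  -- uniform estimate
  have hdiff : ∀ (k l : ℕ), k ≤ l → ∀ g h : ℤ_[p], ‖g - h‖ ≤ (p:ℝ) ^ (-(k:ℤ)) →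
      ‖seq g l - seq h l‖ ≤ ‖z - 1‖ * q ^ k := by
    intro k l hkl g h hgh
    refine hstep k _ _ ?_
    calc ‖((g.appr l : ℤ_[p]) - (h.appr l : ℤ_[p]))‖
        ≤ max ‖(g.appr l : ℤ_[p]) - g‖ ‖g - (h.appr l : ℤ_[p])‖ := htri _ _ _
      _ ≤ (p:ℝ) ^ (-(k:ℤ)) := by
          refine max_le ?_ ?_
          · rw [norm_sub_rev]
            exact (happr g l).trans (hmono k l hkl)
          · refine (htri g h _).trans (max_le (hgh) ((happr h l).trans (hmono k l hkl)))
  -- Cauchy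
  have hcauchy : ∀ g : ℤ_[p], CauchySeq (seq g) := by
    intro g
    refine cauchySeq_of_le_geometric q ‖z - 1‖ hq1 fun l => ?_
    rw [dist_eq_norm]
    refine hstep l _ _ ?_
    refine (htri _ g _).trans (max_le ?_ ?_)
    · rw [norm_sub_rev]
      exact happr g l
    · exact (happr g (l + 1)).trans (hmono l (l+1) (by omega))
  -- define χ
  choose χ hχ using fun g => cauchySeq_tendsto_of_complete (hcauchy g)
  -- limit estimate
  have hχdiff : ∀ (k : ℕ) (g h : ℤ_[p]), ‖g - h‖ ≤ (p:ℝ) ^ (-(k:ℤ)) →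
      ‖χ g - χ h‖ ≤ ‖z - 1‖ * q ^ k := by
    intro k g h hgh
    have hlim : Tendsto (fun l => ‖seq g l - seq h l‖) atTop (𝓝 ‖χ g - χ h‖) :=
      ((hχ g).sub (hχ h)).norm
    refine le_of_tendsto hlim ?_
    filter_upwards [eventually_ge_atTop k] with l hl
    exact hdiff k l hl g h hgh
  -- continuity
  have hcont : Continuous χ := by
    rw [Metric.continuous_iff]
    intro g ε hε
    have htend : Tendsto (fun k : ℕ => ‖z - 1‖ * q ^ k) atTop (𝓝 0) := by
      simpa using (tendsto_pow_atTop_nhds_zero_of_lt_one hq0 hq1).const_mul ‖z - 1‖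
    obtain ⟨k, hk⟩ := (htend.eventually (gt_mem_nhds hε)).exists
    refine ⟨(p:ℝ) ^ (-(k:ℤ)), by positivity, fun h hdist => ?_⟩
    rw [dist_eq_norm] at hdist ⊢
    exact lt_of_le_of_lt (hχdiff k h g hdist.le) hk
  -- a general convergence principle: any good approximating sequence converges to χ g
  have hconv : ∀ (g : ℤ_[p]) (a : ℕ → ℕ),
      (∀ l, ‖((a l : ℤ_[p])) - g‖ ≤ (p:ℝ) ^ (-(l:ℤ))) →
      Tendsto (fun l => z ^ (a l)) atTop (𝓝 (χ g)) := by
    intro g a ha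
    have hb : ∀ l, ‖z ^ (a l) - seq g l‖ ≤ ‖z - 1‖ * q ^ l := by
      intro l
      refine hstep l _ _ ?_
      refine (htri _ g _).trans (max_le (ha l) ?_)
      exact happr g l
    have h0 : Tendsto (fun l => z ^ (a l) - seq g l) atTop (𝓝 0) := by
      refine squeeze_zero_norm hb ?_
      simpa using (tendsto_pow_atTop_nhds_zero_of_lt_one hq0 hq1).const_mul ‖z - 1‖
    have := h0.add (hχ g)
    simpa using this
  -- multiplicativity
  have hmul : ∀ x y : ℤ_[p], χ (x + y) = χ x * χ y := by
    intro x y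
    have h1 : Tendsto (fun l => z ^ (x.appr l + y.appr l)) atTop (𝓝 (χ x * χ y)) := by
      simpa only [pow_add] using (hχ x).mul (hχ y)
    have h2 : Tendsto (fun l => z ^ (x.appr l + y.appr l)) atTop (𝓝 (χ (x + y))) := by
      refine hconv (x + y) _ fun l => ?_
      push_cast
      calc ‖((x.appr l : ℤ_[p]) + (y.appr l : ℤ_[p])) - (x + y)‖
          = ‖((x.appr l : ℤ_[p]) - x) + ((y.appr l : ℤ_[p]) - y)‖ := by ring_nf
        _ ≤ max ‖(x.appr l : ℤ_[p]) - x‖ ‖(y.appr l : ℤ_[p]) - y‖ := norm_add_le_max _ _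
        _ ≤ (p:ℝ) ^ (-(l:ℤ)) := by
            refine max_le ?_ ?_ <;> rw [norm_sub_rev] <;> [exact happr x l; exact happr y l]
    exact tendsto_nhds_unique h2 h1
  -- χ 1 = z
  have hone : χ 1 = z := by
    have h1 : Tendsto (fun l : ℕ => z ^ ((1 : ℕ))) atTop (𝓝 (χ 1)) := by
      refine hconv 1 (fun _ => 1) fun l => ?_
      have hc : ((1:ℕ) : ℤ_[p]) - 1 = 0 := by push_cast; ring
      rw [hc, norm_zero]
      positivity
    have := tendsto_nhds_unique h1 tendsto_const_nhds
    simpa using this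
  -- value on naturals for any character
  have hnatval : ∀ χ' : ℤ_[p] → K,
      (∀ x y : ℤ_[p], χ' (x + y) = χ' x * χ' y) → χ' 1 = z →
      ∀ n : ℕ, χ' (n : ℤ_[p]) = z ^ n := by
    intro χ' hm h1 n
    have hz0 : z ≠ 0 := by
      intro h
      rw [h] at hz1
      simp at hz1
    have h0 : χ' 0 = 1 := by
      have h := hm 1 0
      rw [add_zero, h1] at h
      have h' : z * 1 = z * χ' 0 := by rw [mul_one]; exact h
      exact (mul_left_cancel₀ hz0 h').symm
    induction n with
    | zero => simpa using h0
    | succ n ih =>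
        have hcast : ((n + 1 : ℕ) : ℤ_[p]) = (n : ℤ_[p]) + 1 := by push_cast; ring
        rw [hcast, hm, ih, h1, pow_succ]
  -- assemble
  refine ⟨χ, ⟨hcont, hmul, hone⟩, ?_⟩
  rintro χ' ⟨hc', hm', h1'⟩
  refine PadicInt.denseRange_natCast.equalizer hc' hcont ?_
  funext n
  simp only [Function.comp_apply]
  rw [hnatval χ' hm' h1' n, hnatval χ hmul hone n]
end

section
/- Let T = Fin d → ℤ_p. The map sending a continuous character χ : T → K (i.e., a continuous map with χ(x + y) = χ(x)·χ(y) and χ(0) = 1) to the tuple (χ(δ_1), …, χ(δ_d)), where δ_i is the i-th standard basis vector of T, is a bijection from the set of continuous K-valued characters of T onto the set {z : Fin d → K | ∀ i, ‖z_i − 1‖ < 1}. Moreover this bijection is a group isomorphism: it sends the pointwise product of two characters to the componentwise product of the corresponding tuples. -/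
/-- A continuous `K`-valued character of `T = Fin d → ℤ_p`. -/
def IsContinuousCharacter (p : ℕ) [Fact p.Prime] (d : ℕ) (K : Type*) [NormedField K]
    (χ : (Fin d → ℤ_[p]) → K) : Prop :=
  Continuous χ ∧ (∀ x y : Fin d → ℤ_[p], χ (x + y) = χ x * χ y) ∧ χ 0 = 1

open Filter Topology IsUltrametricDist Finset

namespace CharProof

variable {p : ℕ} [hp : Fact p.Prime] {K : Type*} [NormedField K] [IsUltrametricDist K]

lemma norm_one_of_dist_lt {z : K} (hz : ‖z - 1‖ < 1) : ‖z‖ = 1 := by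
  have h : ‖z - 1 + 1‖ = max ‖z - 1‖ ‖(1 : K)‖ :=
    norm_add_eq_max_of_norm_ne_norm (by simpa using hz.ne)
  simpa [max_eq_right hz.le] using h

lemma norm_pow_sub_one_le {z : K} (hz : ‖z - 1‖ ≤ 1) (m : ℕ) : ‖z ^ m - 1‖ ≤ ‖z - 1‖ := by
  induction m with
  | zero => simpa using norm_nonneg _
  | succ m ih =>
    have key : z ^ (m + 1) - 1 = z ^ m * (z - 1) + (z ^ m - 1) := by ring
    rw [key]
    refine (norm_add_le_max _ _).trans (max_le ?_ ih)
    rw [norm_mul]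
    calc ‖z ^ m‖ * ‖z - 1‖ ≤ 1 * ‖z - 1‖ := by
          refine mul_le_mul_of_nonneg_right ?_ (norm_nonneg _)
          calc ‖z ^ m‖ ≤ ‖z ^ m - 1 + 1‖ := by ring_nf; exact le_rfl
          _ ≤ max ‖z ^ m - 1‖ ‖(1:K)‖ := norm_add_le_max _ _
          _ ≤ 1 := by simp [ih.trans hz]
      _ = ‖z - 1‖ := one_mul _

lemma norm_zpow_sub_one_le {z : K} (hz : ‖z - 1‖ < 1) (t : ℤ) : ‖z ^ t - 1‖ ≤ ‖z - 1‖ := by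
  have hz1 : ‖z‖ = 1 := norm_one_of_dist_lt hz
  have hz0 : z ≠ 0 := by intro h; rw [h] at hz1; simp at hz1
  obtain ⟨m, rfl | rfl⟩ := t.eq_nat_or_neg
  · rw [zpow_natCast]; exact norm_pow_sub_one_le hz.le m
  · have : z ^ (-(m:ℤ)) - 1 = (z ^ (-(m:ℤ))) * (1 - z ^ m) := by
      rw [mul_sub, mul_one, ← zpow_natCast z m, ← zpow_add₀ hz0]
      simp
    rw [this, norm_mul, norm_zpow, hz1, one_zpow, one_mul, norm_sub_rev]
    exact norm_pow_sub_one_le hz.le m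

omit hp [IsUltrametricDist K] in
lemma binom_expand (w : K) (q : ℕ) (hq : 1 ≤ q) :
    w ^ q - 1 = (w - 1) ^ q +
      ∑ i ∈ Finset.range (q - 1), (w - 1) ^ (i + 1) * (q.choose (i + 1) : K) := by
  obtain ⟨m, rfl⟩ : ∃ m, q = m + 1 := ⟨q - 1, by omega⟩
  have h1 : w = (w - 1) + 1 := by ring
  calc w ^ (m + 1) - 1 = ((w - 1) + 1) ^ (m + 1) - 1 := by rw [← h1]
    _ = (∑ k ∈ Finset.range (m + 1 + 1), (w - 1) ^ k * 1 ^ (m + 1 - k) *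
          ((m + 1).choose k : K)) - 1 := by rw [add_pow]
    _ = _ := by
        rw [Finset.sum_range_succ, Finset.sum_range_succ']
        simp only [one_pow, mul_one, Nat.choose_self, Nat.cast_one, pow_zero, one_mul,
          Nat.choose_zero_right, Nat.add_sub_cancel]
        ring

omit hp in
lemma norm_natCast_le_norm_p_of_dvd {c : ℕ} (hc : p ∣ c) : ‖(c : K)‖ ≤ ‖(p : K)‖ := by
  obtain ⟨m, rfl⟩ := hc
  rw [Nat.cast_mul, norm_mul]
  calc ‖(p:K)‖ * ‖(m:K)‖ ≤ ‖(p:K)‖ * 1 :=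
        mul_le_mul_of_nonneg_left (norm_natCast_le_one K m) (norm_nonneg _)
    _ = ‖(p:K)‖ := mul_one _

lemma step {z : K} (hz : ‖z - 1‖ < 1) :
    ‖z ^ p - 1‖ ≤ max ‖(p:K)‖ ‖z - 1‖ * ‖z - 1‖ := by
  have hp2 : 2 ≤ p := hp.out.two_le
  rw [binom_expand z p (by omega)]
  refine (norm_add_le_max _ _).trans (max_le ?_ ?_)
  · rw [norm_pow]
    calc ‖z - 1‖ ^ p ≤ ‖z - 1‖ ^ 2 :=
          pow_le_pow_of_le_one (norm_nonneg _) hz.le hp2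
      _ = ‖z - 1‖ * ‖z - 1‖ := sq _
      _ ≤ max ‖(p:K)‖ ‖z - 1‖ * ‖z - 1‖ :=
          mul_le_mul_of_nonneg_right (le_max_right _ _) (norm_nonneg _)
  · refine norm_sum_le_of_forall_le_of_nonneg ?_ ?_
    · positivity
    · intro i hi
      rw [Finset.mem_range] at hi
      have hdvd : p ∣ p.choose (i + 1) :=
        Nat.Prime.dvd_choose_self hp.out (by omega) (by omega)
      rw [norm_mul, norm_pow]
      calc ‖z - 1‖ ^ (i + 1) * ‖(p.choose (i+1) : K)‖
          ≤ ‖z - 1‖ * ‖(p:K)‖ := by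
            refine mul_le_mul ?_ (norm_natCast_le_norm_p_of_dvd hdvd) (norm_nonneg _)
              (norm_nonneg _)
            exact pow_le_of_le_one (norm_nonneg _) hz.le (by omega)
        _ = ‖(p:K)‖ * ‖z - 1‖ := mul_comm _ _
        _ ≤ max ‖(p:K)‖ ‖z - 1‖ * ‖z - 1‖ :=
            mul_le_mul_of_nonneg_right (le_max_left _ _) (norm_nonneg _)

omit hp [IsUltrametricDist K] in
lemma c_nonneg (z : K) : 0 ≤ max ‖(p:K)‖ ‖z - 1‖ :=
  le_trans (norm_nonneg _) (le_max_left _ _)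

omit hp in
lemma c_le_one {z : K} (hz : ‖z - 1‖ < 1) : max ‖(p:K)‖ ‖z - 1‖ ≤ 1 :=
  max_le (norm_natCast_le_one K p) hz.le

omit hp in
lemma cn_mul_r_le {z : K} (hz : ‖z - 1‖ < 1) (n : ℕ) :
    (max ‖(p:K)‖ ‖z - 1‖) ^ n * ‖z - 1‖ ≤ ‖z - 1‖ := by
  calc (max ‖(p:K)‖ ‖z - 1‖) ^ n * ‖z - 1‖ ≤ 1 * ‖z - 1‖ :=
        mul_le_mul_of_nonneg_right (pow_le_one₀ (c_nonneg z) (c_le_one hz)) (norm_nonneg _)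
    _ = ‖z - 1‖ := one_mul _

lemma norm_pow_p_pow_le {z : K} (hz : ‖z - 1‖ < 1) (n : ℕ) :
    ‖z ^ p ^ n - 1‖ ≤ (max ‖(p:K)‖ ‖z - 1‖) ^ n * ‖z - 1‖ := by
  set c := max ‖(p:K)‖ ‖z - 1‖ with hc
  induction n with
  | zero => simpa using le_rfl
  | succ n ih =>
    have hw : ‖z ^ p ^ n - 1‖ < 1 := lt_of_le_of_lt (ih.trans (cn_mul_r_le hz n)) hz
    have hkey : z ^ p ^ (n + 1) = (z ^ p ^ n) ^ p := by rw [← pow_mul, pow_succ]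
    rw [hkey]
    calc ‖(z ^ p ^ n) ^ p - 1‖ ≤ max ‖(p:K)‖ ‖z ^ p ^ n - 1‖ * ‖z ^ p ^ n - 1‖ := step hw
      _ ≤ c * (c ^ n * ‖z - 1‖) := by
          refine mul_le_mul ?_ ih (norm_nonneg _) (c_nonneg z)
          refine max_le (le_max_left _ _) ?_
          exact le_trans (ih.trans (cn_mul_r_le hz n)) (le_max_right _ _)
      _ = c ^ (n + 1) * ‖z - 1‖ := by ring

lemma norm_zpow_sub_one_le_of_dvd {z : K} (hz : ‖z - 1‖ < 1) {n : ℕ} {t : ℤ}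
    (ht : (p:ℤ) ^ n ∣ t) : ‖z ^ t - 1‖ ≤ (max ‖(p:K)‖ ‖z - 1‖) ^ n * ‖z - 1‖ := by
  obtain ⟨s, rfl⟩ := ht
  rw [zpow_mul]
  have hcast : z ^ ((p:ℤ) ^ n) = z ^ p ^ n := by
    rw [show ((p:ℤ) ^ n) = ((p ^ n : ℕ) : ℤ) by push_cast; ring, zpow_natCast]
  rw [hcast]
  have hw : ‖z ^ p ^ n - 1‖ ≤ (max ‖(p:K)‖ ‖z - 1‖) ^ n * ‖z - 1‖ := norm_pow_p_pow_le hz n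
  have hw1 : ‖z ^ p ^ n - 1‖ < 1 := lt_of_le_of_lt (hw.trans (cn_mul_r_le hz n)) hz
  exact (norm_zpow_sub_one_le hw1 s).trans hw

lemma norm_zpow_sub_zpow_le {z : K} (hz : ‖z - 1‖ < 1) {n : ℕ} {a b : ℤ}
    (h : (p:ℤ) ^ n ∣ a - b) :
    ‖z ^ a - z ^ b‖ ≤ (max ‖(p:K)‖ ‖z - 1‖) ^ n * ‖z - 1‖ := by
  have hz1 : ‖z‖ = 1 := norm_one_of_dist_lt hz
  have hz0 : z ≠ 0 := by intro h0; rw [h0] at hz1; simp at hz1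
  have key : z ^ a - z ^ b = z ^ b * (z ^ (a - b) - 1) := by
    rw [mul_sub, mul_one, ← zpow_add₀ hz0]
    ring_nf
  rw [key, norm_mul, norm_zpow, hz1, one_zpow, one_mul]
  exact norm_zpow_sub_one_le_of_dvd hz h

section Chi

omit [IsUltrametricDist K] in
lemma dvd_of_mem_span {x : ℤ_[p]} {a b : ℤ} {n : ℕ}
    (ha : x - a ∈ Ideal.span {(p:ℤ_[p]) ^ n}) (hb : x - b ∈ Ideal.span {(p:ℤ_[p]) ^ n}) :
    (p:ℤ) ^ n ∣ a - b := by
  rw [← PadicInt.norm_int_le_pow_iff_dvd, PadicInt.norm_le_pow_iff_mem_span_pow]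
  have hmem := sub_mem hb ha
  have : ((a - b : ℤ) : ℤ_[p]) = x - b - (x - a) := by push_cast; ring
  rwa [this]

omit [IsUltrametricDist K] in
lemma appr_mem_span (x : ℤ_[p]) {n m : ℕ} (h : n ≤ m) :
    x - (x.appr m : ℤ_[p]) ∈ Ideal.span {(p:ℤ_[p]) ^ n} := by
  have hsub : Ideal.span {(p:ℤ_[p]) ^ m} ≤ Ideal.span {(p:ℤ_[p]) ^ n} :=
    Ideal.span_singleton_le_span_singleton.mpr (pow_dvd_pow _ h)
  exact hsub (PadicInt.appr_spec m x)

variable [CompleteSpace K]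

/-- The extension of `m ↦ z ^ m` to `ℤ_[p]`. -/
noncomputable def chi (p : ℕ) [Fact p.Prime] (z : K) (x : ℤ_[p]) : K :=
  limUnder atTop fun n => z ^ (x.appr n)

variable (hpK : ‖(p:K)‖ < 1)
include hpK

lemma c_lt_one {z : K} (hz : ‖z - 1‖ < 1) : max ‖(p:K)‖ ‖z - 1‖ < 1 := max_lt hpK hz

lemma tendsto_cn_mul_r {z : K} (hz : ‖z - 1‖ < 1) :
    Tendsto (fun n => (max ‖(p:K)‖ ‖z - 1‖) ^ n * ‖z - 1‖) atTop (𝓝 0) := by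
  rw [show (0:ℝ) = 0 * ‖z - 1‖ by ring]
  exact (tendsto_pow_atTop_nhds_zero_of_lt_one (c_nonneg z) (c_lt_one hpK hz)).mul_const _

lemma chi_cauchySeq {z : K} (hz : ‖z - 1‖ < 1) (x : ℤ_[p]) :
    CauchySeq (fun n => z ^ (x.appr n) : ℕ → K) := by
  refine cauchySeq_of_le_tendsto_0 (fun N => (max ‖(p:K)‖ ‖z - 1‖) ^ N * ‖z - 1‖) ?_
    (tendsto_cn_mul_r hpK hz)
  intro m n N hm hn
  rw [dist_eq_norm]
  have hdvd : (p:ℤ) ^ N ∣ (x.appr m : ℤ) - (x.appr n : ℤ) := by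
    refine dvd_of_mem_span (x := x) ?_ ?_
    · simpa using appr_mem_span x hm
    · simpa using appr_mem_span x hn
  simpa [zpow_natCast] using norm_zpow_sub_zpow_le hz hdvd

lemma chi_tendsto {z : K} (hz : ‖z - 1‖ < 1) (x : ℤ_[p]) :
    Tendsto (fun n => z ^ (x.appr n) : ℕ → K) atTop (𝓝 (chi p z x)) :=
  (chi_cauchySeq hpK hz x).tendsto_limUnder

lemma chi_dist {z : K} (hz : ‖z - 1‖ < 1) (x : ℤ_[p]) (n : ℕ) (t : ℤ)
    (ht : x - (t : ℤ_[p]) ∈ Ideal.span {(p:ℤ_[p]) ^ n}) :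
    ‖chi p z x - z ^ t‖ ≤ (max ‖(p:K)‖ ‖z - 1‖) ^ n * ‖z - 1‖ := by
  have htd : Tendsto (fun m => ‖z ^ (x.appr m) - z ^ t‖) atTop (𝓝 ‖chi p z x - z ^ t‖) :=
    ((chi_tendsto hpK hz x).sub tendsto_const_nhds).norm
  refine le_of_tendsto htd ?_
  filter_upwards [eventually_ge_atTop n] with m hm
  have hdvd : (p:ℤ) ^ n ∣ (x.appr m : ℤ) - t :=
    dvd_of_mem_span (x := x) (by simpa using appr_mem_span x hm) ht
  simpa [zpow_natCast] using norm_zpow_sub_zpow_le hz hdvd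

lemma chi_eq_zpow_of_mem_span {z : K} (hz : ‖z - 1‖ < 1) (x : ℤ_[p]) (t : ℤ)
    (ht : ∀ n : ℕ, x - (t : ℤ_[p]) ∈ Ideal.span {(p:ℤ_[p]) ^ n}) :
    chi p z x = z ^ t := by
  have hnorm : ‖chi p z x - z ^ t‖ ≤ 0 :=
    ge_of_tendsto' (tendsto_cn_mul_r hpK hz) (fun n => chi_dist hpK hz x n t (ht n))
  exact sub_eq_zero.mp (norm_le_zero_iff.mp hnorm)

lemma chi_natCast {z : K} (hz : ‖z - 1‖ < 1) (a : ℕ) :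
    chi p z (a : ℤ_[p]) = z ^ a := by
  have := chi_eq_zpow_of_mem_span hpK hz (a : ℤ_[p]) (a : ℤ)
    (fun n => by simp)
  rwa [zpow_natCast] at this

lemma chi_zero {z : K} (hz : ‖z - 1‖ < 1) : chi p z 0 = 1 := by
  simpa using chi_natCast hpK hz 0

lemma chi_one {z : K} (hz : ‖z - 1‖ < 1) : chi p z 1 = z := by
  simpa using chi_natCast hpK hz 1

lemma chi_add {z : K} (hz : ‖z - 1‖ < 1) (x y : ℤ_[p]) :
    chi p z (x + y) = chi p z x * chi p z y := by
  have h1 : Tendsto (fun n => z ^ (x.appr n + y.appr n)) atTop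
      (𝓝 (chi p z x * chi p z y)) := by
    simpa [pow_add] using (chi_tendsto hpK hz x).mul (chi_tendsto hpK hz y)
  have h2 : Tendsto (fun n => z ^ ((x + y).appr n) - z ^ (x.appr n + y.appr n)) atTop
      (𝓝 0) := by
    refine squeeze_zero_norm (fun n => ?_) (tendsto_cn_mul_r hpK hz)
    have hdvd : (p:ℤ) ^ n ∣ ((x + y).appr n : ℤ) - ((x.appr n + y.appr n : ℕ) : ℤ) := by
      refine dvd_of_mem_span (x := x + y) (PadicInt.appr_spec n (x + y)) ?_
      have := add_mem (PadicInt.appr_spec n x) (PadicInt.appr_spec n y)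
      have heq : x + y - ((x.appr n + y.appr n : ℕ) : ℤ_[p])
          = x - x.appr n + (y - y.appr n) := by push_cast; ring
      rwa [show (((x.appr n + y.appr n : ℕ) : ℤ) : ℤ_[p])
        = ((x.appr n + y.appr n : ℕ) : ℤ_[p]) by push_cast; ring, heq]
    have hb := norm_zpow_sub_zpow_le hz hdvd
    rw [zpow_natCast, zpow_natCast] at hb
    exact hb
  have h3 : Tendsto (fun n => z ^ ((x + y).appr n)) atTop (𝓝 (chi p z x * chi p z y)) := by
    simpa using h2.add h1
  exact tendsto_nhds_unique (chi_tendsto hpK hz (x + y)) h3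

lemma chi_sub_bound {z : K} (hz : ‖z - 1‖ < 1) (x y : ℤ_[p]) (n : ℕ)
    (h : x - y ∈ Ideal.span {(p:ℤ_[p]) ^ n}) :
    ‖chi p z x - chi p z y‖ ≤ (max ‖(p:K)‖ ‖z - 1‖) ^ n * ‖z - 1‖ := by
  have hx : x - ((y.appr n : ℤ) : ℤ_[p]) ∈ Ideal.span {(p:ℤ_[p]) ^ n} := by
    have heq : x - ((y.appr n : ℤ) : ℤ_[p]) = (x - y) + (y - y.appr n) := by push_cast; ring
    rw [heq]
    exact add_mem h (PadicInt.appr_spec n y)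
  have hy : y - ((y.appr n : ℤ) : ℤ_[p]) ∈ Ideal.span {(p:ℤ_[p]) ^ n} := by
    simpa using PadicInt.appr_spec n y
  have h1 := chi_dist hpK hz x n (y.appr n) hx
  have h2 := chi_dist hpK hz y n (y.appr n) hy
  have key : chi p z x - chi p z y
      = (chi p z x - z ^ (y.appr n : ℤ)) - (chi p z y - z ^ (y.appr n : ℤ)) := by ring
  rw [key, sub_eq_add_neg]
  refine (norm_add_le_max _ _).trans (max_le h1 ?_)
  rwa [norm_neg]

lemma chi_continuous {z : K} (hz : ‖z - 1‖ < 1) : Continuous (chi p z) := by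
  rw [Metric.continuous_iff]
  intro x ε hε
  obtain ⟨n, hn⟩ : ∃ n, (max ‖(p:K)‖ ‖z - 1‖) ^ n * ‖z - 1‖ < ε :=
    ((tendsto_cn_mul_r hpK hz).eventually (gt_mem_nhds hε)).exists
  refine ⟨(p:ℝ) ^ (-n : ℤ), zpow_pos (by exact_mod_cast hp.out.pos) _, fun y hy => ?_⟩
  have hmem : y - x ∈ Ideal.span {(p:ℤ_[p]) ^ n} := by
    rw [← PadicInt.norm_le_pow_iff_mem_span_pow]
    calc ‖y - x‖ = dist y x := (dist_eq_norm y x).symm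
      _ ≤ (p:ℝ) ^ (-n : ℤ) := hy.le
  calc dist (chi p z y) (chi p z x) = ‖chi p z y - chi p z x‖ := dist_eq_norm _ _
    _ ≤ (max ‖(p:K)‖ ‖z - 1‖) ^ n * ‖z - 1‖ := chi_sub_bound hpK hz y x n hmem
    _ < ε := hn

end Chi

section Characters

variable {d : ℕ}

omit [IsUltrametricDist K] in
lemma char_nsmul {χ : (Fin d → ℤ_[p]) → K} (hχ : IsContinuousCharacter p d K χ)
    (x : Fin d → ℤ_[p]) (n : ℕ) : χ (n • x) = χ x ^ n := by
  induction n with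
  | zero => simpa using hχ.2.2
  | succ n ih => rw [succ_nsmul, hχ.2.1, ih, pow_succ]

omit [IsUltrametricDist K] in
lemma char_sum {χ : (Fin d → ℤ_[p]) → K} (hχ : IsContinuousCharacter p d K χ)
    {ι : Type*} (s : Finset ι) (f : ι → (Fin d → ℤ_[p])) :
    χ (∑ i ∈ s, f i) = ∏ i ∈ s, χ (f i) := by
  classical
  induction s using Finset.induction_on with
  | empty => simpa using hχ.2.2
  | insert a s h ih => rw [Finset.sum_insert h, hχ.2.1, Finset.prod_insert h, ih]

omit [IsUltrametricDist K] in
lemma char_pow_tendsto {χ : (Fin d → ℤ_[p]) → K} (hχ : IsContinuousCharacter p d K χ)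
    (v : Fin d → ℤ_[p]) :
    Tendsto (fun n => χ v ^ p ^ n) atTop (𝓝 1) := by
  have h0 : Tendsto (fun n : ℕ => (p : ℤ_[p]) ^ n • v) atTop (𝓝 0) := by
    have hnorm : ‖(p : ℤ_[p])‖ < 1 := by
      rw [PadicInt.norm_p]
      exact inv_lt_one_of_one_lt₀ (by exact_mod_cast hp.out.one_lt)
    simpa using (tendsto_pow_atTop_nhds_zero_of_norm_lt_one hnorm).smul_const v
  have h1 := (hχ.1.tendsto 0).comp h0
  rw [hχ.2.2] at h1
  refine h1.congr fun n => ?_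
  show χ ((p:ℤ_[p]) ^ n • v) = χ v ^ p ^ n
  rw [show ((p:ℤ_[p]) ^ n) = ((p ^ n : ℕ) : ℤ_[p]) by push_cast; ring,
    Nat.cast_smul_eq_nsmul, char_nsmul hχ]

lemma norm_eq_one_of_tendsto {z : K} (h : Tendsto (fun n => z ^ p ^ n) atTop (𝓝 1)) :
    ‖z‖ = 1 := by
  have hev : ∀ᶠ n in atTop, ‖z ^ p ^ n - 1‖ < 1 := by
    have h2 := (h.sub (tendsto_const_nhds (x := (1:K)))).norm
    simp only [sub_self, norm_zero] at h2
    exact h2.eventually (gt_mem_nhds one_pos)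
  obtain ⟨N, hN⟩ := hev.exists
  have h1 : ‖z ^ p ^ N‖ = 1 := norm_one_of_dist_lt hN
  rw [norm_pow] at h1
  have hpN : p ^ N ≠ 0 := pow_ne_zero _ hp.out.pos.ne'
  rcases lt_trichotomy ‖z‖ 1 with hlt | heq | hgt
  · have := pow_lt_one₀ (norm_nonneg z) hlt hpN
    linarith
  · exact heq
  · have := one_lt_pow₀ hgt hpN
    linarith

lemma mem_disc_of_tendsto (hpK : ‖(p:K)‖ < 1) {z : K}
    (h : Tendsto (fun n => z ^ p ^ n) atTop (𝓝 1)) : ‖z - 1‖ < 1 := by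
  by_contra hc
  push_neg at hc
  have hz1 : ‖z‖ = 1 := norm_eq_one_of_tendsto h
  have heq : ‖z - 1‖ = 1 := by
    refine le_antisymm ?_ hc
    calc ‖z - 1‖ = ‖z + (-1)‖ := by rw [sub_eq_add_neg]
      _ ≤ max ‖z‖ ‖(-1 : K)‖ := norm_add_le_max _ _
      _ ≤ 1 := by simp [hz1]
  have hall : ∀ N, ‖z ^ p ^ N - 1‖ = 1 := by
    intro N
    have hq : 1 ≤ p ^ N := Nat.one_le_pow _ _ hp.out.pos
    rw [binom_expand z (p ^ N) hq]
    have hE : ‖∑ i ∈ Finset.range (p ^ N - 1),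
        (z - 1) ^ (i + 1) * ((p ^ N).choose (i + 1) : K)‖ ≤ ‖(p:K)‖ := by
      refine norm_sum_le_of_forall_le_of_nonneg (norm_nonneg _) fun i hi => ?_
      rw [Finset.mem_range] at hi
      have hdvd : p ∣ (p ^ N).choose (i + 1) :=
        Nat.Prime.dvd_choose_pow hp.out (by omega) (by omega)
      rw [norm_mul, norm_pow, heq, one_pow, one_mul]
      exact norm_natCast_le_norm_p_of_dvd hdvd
    have h1 : ‖(z - 1) ^ p ^ N‖ = 1 := by rw [norm_pow, heq, one_pow]
    rw [norm_add_eq_max_of_norm_ne_norm (by rw [h1]; exact (lt_of_le_of_lt hE hpK).ne'),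
      h1, max_eq_left (le_trans hE hpK.le)]
  have hev : ∀ᶠ n in atTop, ‖z ^ p ^ n - 1‖ < 1 := by
    have h2 := (h.sub (tendsto_const_nhds (x := (1:K)))).norm
    simp only [sub_self, norm_zero] at h2
    exact h2.eventually (gt_mem_nhds one_pos)
  obtain ⟨N, hN⟩ := hev.exists
  rw [hall N] at hN
  exact lt_irrefl 1 hN


section More

variable {d : ℕ} [CompleteSpace K]

omit [IsUltrametricDist K] [CompleteSpace K] in
lemma single_eq_smul (i : Fin d) (a : ℤ_[p]) :
    Pi.single i a = a • (Pi.single i 1 : Fin d → ℤ_[p]) := by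
  funext j
  by_cases h : j = i
  · subst h; simp
  · simp [Pi.single_eq_of_ne h]

omit [IsUltrametricDist K] in
lemma char_eq_of_eq_on_single {χ₁ χ₂ : (Fin d → ℤ_[p]) → K}
    (h₁ : IsContinuousCharacter p d K χ₁) (h₂ : IsContinuousCharacter p d K χ₂)
    (h : ∀ i, χ₁ (Pi.single i 1) = χ₂ (Pi.single i 1)) : χ₁ = χ₂ := by
  have hsingle : ∀ (i : Fin d) (a : ℤ_[p]),
      χ₁ (a • (Pi.single i 1 : Fin d → ℤ_[p])) = χ₂ (a • (Pi.single i 1 : Fin d → ℤ_[p])) := by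
    intro i
    have hc1 : Continuous fun a : ℤ_[p] => χ₁ (a • (Pi.single i 1 : Fin d → ℤ_[p])) :=
      h₁.1.comp (continuous_id.smul continuous_const)
    have hc2 : Continuous fun a : ℤ_[p] => χ₂ (a • (Pi.single i 1 : Fin d → ℤ_[p])) :=
      h₂.1.comp (continuous_id.smul continuous_const)
    have heq : (fun a : ℤ_[p] => χ₁ (a • (Pi.single i 1 : Fin d → ℤ_[p])))
        = fun a : ℤ_[p] => χ₂ (a • (Pi.single i 1 : Fin d → ℤ_[p])) := by
      refine Continuous.ext_on PadicInt.denseRange_natCast hc1 hc2 ?_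
      rintro _ ⟨n, rfl⟩
      show χ₁ ((n : ℤ_[p]) • (Pi.single i 1 : Fin d → ℤ_[p]))
          = χ₂ ((n : ℤ_[p]) • (Pi.single i 1 : Fin d → ℤ_[p]))
      rw [Nat.cast_smul_eq_nsmul, char_nsmul h₁, char_nsmul h₂, h i]
    exact fun a => congrFun heq a
  funext x
  have hx : x = ∑ j, Pi.single j (x j) := by
    funext i
    rw [Finset.sum_apply]
    exact (Fintype.sum_pi_single i x).symm
  calc χ₁ x = χ₁ (∑ j, Pi.single j (x j)) := by rw [← hx]
    _ = ∏ j, χ₁ (Pi.single j (x j)) := char_sum h₁ _ _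
    _ = ∏ j, χ₂ (Pi.single j (x j)) := by
        refine Finset.prod_congr rfl fun j _ => ?_
        rw [single_eq_smul, hsingle]
    _ = χ₂ (∑ j, Pi.single j (x j)) := (char_sum h₂ _ _).symm
    _ = χ₂ x := by rw [← hx]

/-- The character associated to a point of the open polydisc. -/
noncomputable def bigChi (p : ℕ) [Fact p.Prime] (z : Fin d → K) (x : Fin d → ℤ_[p]) : K :=
  ∏ i, chi p (z i) (x i)

lemma bigChi_isChar (hpK : ‖(p:K)‖ < 1) {z : Fin d → K} (hz : ∀ i, ‖z i - 1‖ < 1) :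
    IsContinuousCharacter p d K (bigChi p z) := by
  refine ⟨?_, ?_, ?_⟩
  · exact continuous_finset_prod _ fun i _ =>
      (chi_continuous hpK (hz i)).comp (continuous_apply i)
  · intro x y
    simp only [bigChi, Pi.add_apply]
    rw [← Finset.prod_mul_distrib]
    exact Finset.prod_congr rfl fun i _ => chi_add hpK (hz i) _ _
  · simp only [bigChi, Pi.zero_apply]
    exact Finset.prod_eq_one fun i _ => chi_zero hpK (hz i)

lemma bigChi_single (hpK : ‖(p:K)‖ < 1) {z : Fin d → K} (hz : ∀ i, ‖z i - 1‖ < 1)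
    (i : Fin d) : bigChi p z (Pi.single i 1) = z i := by
  rw [bigChi, Finset.prod_eq_single i]
  · rw [Pi.single_eq_same, chi_one hpK (hz i)]
  · intro j _ hj
    rw [Pi.single_eq_of_ne hj, chi_zero hpK (hz j)]
  · simp

end More
end Characters

end CharProof

/-- The map `χ ↦ (χ(δ_1), …, χ(δ_d))` (values on the standard basis
vectors) is a bijection from the continuous characters of `T = Fin d → ℤ_p` onto
`{z : Fin d → K | ∀ i, ‖z i - 1‖ < 1}`, and it sends pointwise products of
characters to componentwise products of tuples. -/
theorem characters_equiv_open_polydisc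
    (p : ℕ) [Fact p.Prime] (d : ℕ)
    (K : Type*) [NormedField K] [CompleteSpace K] [IsUltrametricDist K]
    [NormedAlgebra ℚ_[p] K]
    (hnorm : ∀ x : ℚ_[p], ‖algebraMap ℚ_[p] K x‖ = ‖x‖) :
    Set.BijOn
      (fun χ : {χ : (Fin d → ℤ_[p]) → K // IsContinuousCharacter p d K χ} =>
        (fun i : Fin d => χ.1 (Pi.single i 1)))
      Set.univ {z : Fin d → K | ∀ i, ‖z i - 1‖ < 1}
    ∧
    ∀ χ₁ χ₂ : {χ : (Fin d → ℤ_[p]) → K // IsContinuousCharacter p d K χ},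
      IsContinuousCharacter p d K (fun x => χ₁.1 x * χ₂.1 x) ∧
      (fun i : Fin d => (fun x => χ₁.1 x * χ₂.1 x) (Pi.single i 1)) =
        (fun i : Fin d => χ₁.1 (Pi.single i 1) * χ₂.1 (Pi.single i 1)) := by
  have hpK : ‖(p:K)‖ < 1 := by
    have hcast : ((p : ℕ) : K) = algebraMap ℚ_[p] K ((p : ℕ) : ℚ_[p]) :=
      (map_natCast (algebraMap ℚ_[p] K) p).symm
    rw [hcast, hnorm, Padic.norm_p]
    exact inv_lt_one_of_one_lt₀ (by exact_mod_cast (Fact.out : p.Prime).one_lt)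
  constructor
  · refine ⟨?_, ?_, ?_⟩
    · rintro ⟨χ, hχ⟩ -
      intro i
      exact CharProof.mem_disc_of_tendsto hpK (CharProof.char_pow_tendsto hχ _)
    · rintro ⟨χ₁, h₁⟩ - ⟨χ₂, h₂⟩ - h
      exact Subtype.ext (CharProof.char_eq_of_eq_on_single h₁ h₂ fun i => congrFun h i)
    · rintro z hz
      exact ⟨⟨CharProof.bigChi p z, CharProof.bigChi_isChar hpK hz⟩, Set.mem_univ _,
        funext fun i => CharProof.bigChi_single hpK hz i⟩
  · intro χ₁ χ₂
    refine ⟨⟨χ₁.2.1.mul χ₂.2.1, fun x y => ?_, ?_⟩, rfl⟩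
    · show χ₁.1 (x + y) * χ₂.1 (x + y) = χ₁.1 x * χ₂.1 x * (χ₁.1 y * χ₂.1 y)
      rw [χ₁.2.2.1, χ₂.2.2.1]; ring
    · show χ₁.1 0 * χ₂.1 0 = 1
      rw [χ₁.2.2.2, χ₂.2.2.2, one_mul]
end

section
/- Let χ : ℤ_p → K be a continuous function with χ(x + y) = χ(x)·χ(y) for all x, y ∈ ℤ_p and χ(0) = 1. Then χ is locally ℚ_p-analytic: there exists m ∈ ℕ such that for every g ∈ ℤ_p there are coefficients a : ℕ → K with the property that for all h ∈ ℤ_p with ‖h‖ ≤ p^(−m), the series ∑_{n≥0} a_n · (ι h)^n converges (HasSum) to χ(g + h), where ι : ℤ_p → K is the canonical map (the composition of the inclusion ℤ_p ⊆ ℚ_p with the structure map ℚ_p → K). -/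
open Finset

/-- The `p`-adic norm of `(n!)⁻¹` is at most `p ^ n`. -/
lemma aux_norm_factorial_inv_le (p : ℕ) [Fact p.Prime] (n : ℕ) :
    ‖((n.factorial : ℚ_[p]))⁻¹‖ ≤ (p : ℝ) ^ n := by
  have hp1 : (1 : ℝ) < p := by exact_mod_cast (Fact.out : p.Prime).one_lt
  have hlow : ((p : ℝ)) ^ (-(n : ℤ)) ≤ ‖(n.factorial : ℚ_[p])‖ := by
    by_contra hlt
    push_neg at hlt
    have h2 : ‖(n.factorial : ℚ_[p])‖ ≤ (p : ℝ) ^ (-(n : ℤ) - 1) :=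
      (Padic.norm_lt_pow_iff_norm_le_pow_sub_one (n.factorial : ℚ_[p]) (-(n : ℤ))).mp hlt
    have h3 : ((p : ℤ) ^ (n + 1) ∣ ((n.factorial : ℕ) : ℤ)) := by
      refine (Padic.norm_int_le_pow_iff_dvd ((n.factorial : ℕ) : ℤ) (n + 1)).mp ?_
      have he : (((n.factorial : ℕ) : ℤ) : ℚ_[p]) = (n.factorial : ℚ_[p]) := by push_cast; ring
      rw [he]
      convert h2 using 2
      push_cast
      ring
    have h4 : p ^ (n + 1) ∣ n.factorial := by exact_mod_cast h3
    have h5 : n + 1 ≤ padicValNat p (n.factorial) :=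
      (padicValNat_dvd_iff_le n.factorial_ne_zero).mp h4
    have h6 : padicValNat p (n.factorial) ≤ n := by
      have hple : 1 ≤ p - 1 := by
        have := (Fact.out : p.Prime).two_le; omega
      calc padicValNat p (n.factorial) ≤ (p - 1) * padicValNat p (n.factorial) :=
            Nat.le_mul_of_pos_left _ (by omega)
        _ = n - (p.digits n).sum := sub_one_mul_padicValNat_factorial n
        _ ≤ n := Nat.sub_le _ _
    omega
  rw [norm_inv]
  have hlow' : ((p : ℝ) ^ n)⁻¹ ≤ ‖(n.factorial : ℚ_[p])‖ := by
    rwa [zpow_neg, zpow_natCast] at hlow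
  have hpos : (0 : ℝ) < ((p : ℝ) ^ n)⁻¹ := by positivity
  calc ‖(n.factorial : ℚ_[p])‖⁻¹ ≤ (((p : ℝ) ^ n)⁻¹)⁻¹ := by gcongr
    _ = (p : ℝ) ^ n := inv_inv _

set_option maxHeartbeats 1600000 in
/-- Every continuous `K`-valued character of `ℤ_p` is locally
`ℚ_p`-analytic: there is an `m` such that around every point `g` the character is
given by a power series converging on the ball of radius `p^(-m)`. -/
theorem continuous_character_locally_analytic
    (p : ℕ) [Fact p.Prime]
    (K : Type*) [NormedField K] [CompleteSpace K] [IsUltrametricDist K]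
    [NormedAlgebra ℚ_[p] K]
    (hnorm : ∀ x : ℚ_[p], ‖algebraMap ℚ_[p] K x‖ = ‖x‖)
    (χ : ℤ_[p] → K) (hcont : Continuous χ)
    (hmul : ∀ x y : ℤ_[p], χ (x + y) = χ x * χ y) (h0 : χ 0 = 1) :
    ∃ m : ℕ, ∀ g : ℤ_[p], ∃ a : ℕ → K,
      ∀ h : ℤ_[p], ‖h‖ ≤ (p : ℝ) ^ (-(m : ℤ)) →
        HasSum (fun n : ℕ => a n * (algebraMap ℚ_[p] K (h : ℚ_[p])) ^ n) (χ (g + h)) := by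
  classical
  set π : ℚ_[p] →+* K := algebraMap ℚ_[p] K with hπdef
  have hπinj : Function.Injective π := π.injective
  have hp1 : (1 : ℝ) < p := by exact_mod_cast (Fact.out : p.Prime).one_lt
  have hp0 : (0 : ℝ) < p := lt_trans one_pos hp1
  set r : ℝ := (p : ℝ)⁻¹ with hrdef
  have hr0 : 0 < r := inv_pos.mpr hp0
  have hr1 : r < 1 := inv_lt_one_of_one_lt₀ hp1
  -- choose `m` by continuity at 0
  obtain ⟨δ, hδ0, hδ⟩ := Metric.continuousAt_iff.mp (hcont.continuousAt (x := 0))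
    (r ^ 3) (by positivity)
  obtain ⟨m, hm⟩ := exists_pow_lt_of_lt_one hδ0 hr1
  have hball : ∀ x : ℤ_[p], ‖x‖ ≤ (p : ℝ) ^ (-(m : ℤ)) → ‖χ x - 1‖ ≤ r ^ 3 := by
    intro x hx
    have h1 : dist x 0 < δ := by
      rw [dist_eq_norm, sub_zero]
      calc ‖x‖ ≤ (p : ℝ) ^ (-(m : ℤ)) := hx
        _ = r ^ m := by rw [zpow_neg, zpow_natCast, ← inv_pow]
        _ < δ := hm
    have h2 := hδ h1
    rw [dist_eq_norm, h0] at h2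
    exact h2.le
  refine ⟨m, ?_⟩
  intro g
  set P : ℤ_[p] := (p : ℤ_[p]) ^ m with hPdef
  set t : K := χ P - 1 with htdef
  have hPnorm : ‖P‖ ≤ (p : ℝ) ^ (-(m : ℤ)) := by
    rw [hPdef, PadicInt.norm_p_pow]
  have ht : ‖t‖ ≤ r ^ 3 := hball P hPnorm
  have ht1 : ‖t‖ < 1 := lt_of_le_of_lt ht (pow_lt_one₀ hr0.le hr1 (by norm_num))
  -- the canonical map ι : ℤ_[p] → K
  set ι : ℤ_[p] →+* K := π.comp (PadicInt.Coe.ringHom) with hιdef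
  have hιapp : ∀ y : ℤ_[p], ι y = π (y : ℚ_[p]) := fun y => rfl
  have hιnorm : ∀ y : ℤ_[p], ‖π (y : ℚ_[p])‖ ≤ 1 := by
    intro y
    rw [hnorm, ← PadicInt.norm_def]
    exact PadicInt.norm_le_one y
  -- the function F, candidate for `x ↦ χ (P * x)`
  set F : ℤ_[p] → K := fun x => ∑' n : ℕ, π (mahler n x) * t ^ n with hFdef
  have hterm_bound : ∀ (n : ℕ) (x : ℤ_[p]), ‖π (mahler n x) * t ^ n‖ ≤ ‖t‖ ^ n := by
    intro n x
    have h1 : ‖π (mahler n x)‖ ≤ 1 := by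
      rw [mahler_apply]
      exact hιnorm _
    calc ‖π (mahler n x) * t ^ n‖ = ‖π (mahler n x)‖ * ‖t‖ ^ n := by
          rw [norm_mul, norm_pow]
      _ ≤ 1 * ‖t‖ ^ n := by
          exact mul_le_mul_of_nonneg_right h1 (by positivity)
      _ = ‖t‖ ^ n := one_mul _
  have hgeo : Summable fun n : ℕ => ‖t‖ ^ n :=
    summable_geometric_of_lt_one (norm_nonneg t) ht1
  have hFhasSum : ∀ x : ℤ_[p], HasSum (fun n : ℕ => π (mahler n x) * t ^ n) (F x) :=
    fun x => (Summable.of_norm_bounded hgeo (fun n => hterm_bound n x)).hasSum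
  have hFcont : Continuous F := by
    refine continuous_tsum (fun n => ?_) hgeo (fun n x => hterm_bound n x)
    exact ((continuous_algebraMap ℚ_[p] K).comp (continuous_subtype_val.comp (mahler n).continuous)).mul continuous_const
  have hχpow : ∀ N : ℕ, χ (P * (N : ℤ_[p])) = χ P ^ N := by
    intro N
    induction N with
    | zero => simpa using h0
    | succ n ih =>
      have he : P * ((n + 1 : ℕ) : ℤ_[p]) = P * (n : ℤ_[p]) + P := by push_cast; ring
      rw [he, hmul, ih, pow_succ]
  have hFnat : ∀ N : ℕ, F ((N : ℕ) : ℤ_[p]) = χ (P * (N : ℤ_[p])) := by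
    intro N
    have hvan : ∀ n ∉ range (N + 1), π (mahler n ((N : ℕ) : ℤ_[p])) * t ^ n = 0 := by
      intro n hn
      rw [mem_range, not_lt] at hn
      rw [mahler_natCast_eq, Nat.choose_eq_zero_of_lt (by omega)]
      simp
    have h1 := hasSum_sum_of_ne_finset_zero (L := SummationFilter.unconditional ℕ) hvan
    have h2 : ∑ n ∈ range (N + 1), π (mahler n ((N : ℕ) : ℤ_[p])) * t ^ n = (t + 1) ^ N := by
      rw [add_pow]
      refine Finset.sum_congr rfl fun k hk => ?_
      rw [mahler_natCast_eq, PadicInt.coe_natCast, map_natCast, one_pow]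
      ring
    rw [h2] at h1
    calc F ((N : ℕ) : ℤ_[p]) = (t + 1) ^ N := h1.tsum_eq
      _ = χ P ^ N := by rw [htdef]; ring_nf
      _ = χ (P * (N : ℤ_[p])) := (hχpow N).symm
  have hFeq : ∀ x : ℤ_[p], F x = χ (P * x) := by
    have hd : Dense (Set.range ((↑·) : ℕ → ℤ_[p])) := PadicInt.denseRange_natCast
    have hgc : Continuous fun x : ℤ_[p] => χ (P * x) :=
      hcont.comp (continuous_const.mul continuous_id)
    have heq := Continuous.ext_on hd hFcont hgc ?_
    · exact fun x => congrFun heq x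
    · rintro x ⟨N, rfl⟩
      exact hFnat N
  -- coefficients
  set B : ℕ → ℕ → K := fun n k =>
    π (((descPochhammer ℤ n).coeff k : ℚ_[p]) * ((n.factorial : ℚ_[p]))⁻¹) * t ^ n with hBdef
  have hBzero : ∀ n k : ℕ, n < k → B n k = 0 := by
    intro n k hnk
    have hc : (descPochhammer ℤ n).coeff k = 0 := by
      apply Polynomial.coeff_eq_zero_of_natDegree_lt
      rwa [descPochhammer_natDegree]
    rw [hBdef]
    simp [hc]
  have hBbound : ∀ n k : ℕ, ‖B n k‖ ≤ r ^ n * r ^ k := by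
    intro n k
    rcases lt_or_ge n k with hnk | hnk
    · rw [hBzero n k hnk, norm_zero]; positivity
    · have h1 : ‖B n k‖ ≤ (p : ℝ) ^ n * ‖t‖ ^ n := by
        rw [hBdef]
        simp only
        rw [norm_mul, norm_pow, hnorm, norm_mul]
        have hc1 : ‖((descPochhammer ℤ n).coeff k : ℚ_[p])‖ ≤ 1 :=
          Padic.norm_int_le_one _
        have hc2 : ‖((n.factorial : ℚ_[p]))⁻¹‖ ≤ (p : ℝ) ^ n := aux_norm_factorial_inv_le p n
        calc ‖((descPochhammer ℤ n).coeff k : ℚ_[p])‖ * ‖((n.factorial : ℚ_[p]))⁻¹‖ * ‖t‖ ^ n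
            ≤ 1 * (p : ℝ) ^ n * ‖t‖ ^ n := by
              refine mul_le_mul_of_nonneg_right (mul_le_mul hc1 hc2 (norm_nonneg _) one_pos.le)
                (by positivity)
          _ = (p : ℝ) ^ n * ‖t‖ ^ n := by ring
      have h2 : (p : ℝ) ^ n * ‖t‖ ^ n ≤ (p : ℝ) ^ n * (r ^ 3) ^ n := by
        exact mul_le_mul_of_nonneg_left (pow_le_pow_left₀ (norm_nonneg t) ht n) (by positivity)
      have hpr : (p : ℝ) * r ^ 3 = r ^ 2 := by
        rw [hrdef]
        field_simp
      have h3 : (p : ℝ) ^ n * (r ^ 3) ^ n = (r ^ 2) ^ n := by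
        rw [← mul_pow, hpr]
      have h4 : (r ^ 2) ^ n ≤ r ^ n * r ^ k := by
        rw [← pow_mul, ← pow_add]
        exact pow_le_pow_of_le_one hr0.le hr1.le (by omega)
      calc ‖B n k‖ ≤ (p : ℝ) ^ n * ‖t‖ ^ n := h1
        _ ≤ (p : ℝ) ^ n * (r ^ 3) ^ n := h2
        _ = (r ^ 2) ^ n := h3
        _ ≤ r ^ n * r ^ k := h4
  have hBcolSummable : ∀ k : ℕ, Summable fun n => B n k := by
    intro k
    exact Summable.of_norm_bounded
      ((summable_geometric_of_lt_one hr0.le hr1).mul_right (r ^ k)) (fun n => hBbound n k)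
  refine ⟨fun k => χ g * (π ((p : ℚ_[p]) ^ m))⁻¹ ^ k * ∑' n, B n k, ?_⟩
  intro h hh
  obtain ⟨u, hu⟩ : P ∣ h := by
    rw [hPdef]
    have h1 := (PadicInt.norm_le_pow_iff_mem_span_pow h m).mp hh
    rwa [Ideal.mem_span_singleton] at h1
  -- the double series
  set f2 : ℕ × ℕ → K := fun nk => B nk.1 nk.2 * π ((u : ℤ_[p]) : ℚ_[p]) ^ nk.2 with hf2def
  have hπu : ‖π ((u : ℤ_[p]) : ℚ_[p])‖ ≤ 1 := hιnorm u
  have hf2bound : ∀ nk : ℕ × ℕ, ‖f2 nk‖ ≤ r ^ nk.1 * r ^ nk.2 := by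
    intro ⟨n, k⟩
    calc ‖f2 (n, k)‖ = ‖B n k‖ * ‖π ((u : ℤ_[p]) : ℚ_[p])‖ ^ k := by
          rw [hf2def]; simp only; rw [norm_mul, norm_pow]
      _ ≤ (r ^ n * r ^ k) * 1 := by
          refine mul_le_mul (hBbound n k) (pow_le_one₀ (norm_nonneg _) hπu)
            (by positivity) (by positivity)
      _ = r ^ n * r ^ k := mul_one _
  have hf2summable : Summable f2 := by
    refine Summable.of_norm_bounded ?_ hf2bound
    exact (summable_geometric_of_lt_one hr0.le hr1).mul_of_nonneg
      (summable_geometric_of_lt_one hr0.le hr1)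
      (fun n => by positivity) (fun n => by positivity)
  -- row sums : polynomial expansion of `mahler n`
  have hrowId : ∀ n : ℕ,
      π (mahler n u) * t ^ n = ∑ k ∈ range (n + 1), f2 (n, k) := by
    intro n
    have hfq : ((n.factorial : ℚ_[p])) ≠ 0 := by exact_mod_cast n.factorial_ne_zero
    have hZ : ((n.factorial : ℤ_[p])) * Ring.choose u n
        = ∑ k ∈ range (n + 1), ((descPochhammer ℤ n).coeff k : ℤ_[p]) * u ^ k := by
      have h1 := Ring.descPochhammer_eq_factorial_smul_choose (R := ℤ_[p]) u n
      have h2 : (descPochhammer ℤ n).smeval u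
          = ∑ k ∈ range (n + 1), ((descPochhammer ℤ n).coeff k : ℤ_[p]) * u ^ k := by
        have hsupp : (descPochhammer ℤ n).support ⊆ range (n + 1) :=
          Polynomial.supp_subset_range (m := n + 1)
            (by rw [descPochhammer_natDegree]; omega)
        rw [Polynomial.smeval_eq_sum, Polynomial.sum]
        rw [Finset.sum_subset hsupp]
        · exact Finset.sum_congr rfl fun k _ => by
            rw [Polynomial.smul_pow, zsmul_eq_mul]
        · intro k _ hk
          rw [Polynomial.smul_pow, Polynomial.notMem_support_iff.mp hk, zero_smul]
      calc ((n.factorial : ℤ_[p])) * Ring.choose u n = n.factorial • Ring.choose u n := (nsmul_eq_mul _ _).symm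
        _ = (descPochhammer ℤ n).smeval u := h1.symm
        _ = _ := h2
    have hK := congrArg ι hZ
    simp only [map_mul, map_sum, map_pow, map_intCast, map_natCast] at hK
    -- hK : (n.factorial : K) * ι (Ring.choose u n) = ∑ k ∈ range (n+1), (coeff k : K) * ι u ^ k
    have hfK : ((n.factorial : K)) ≠ 0 := by
      have he : ((n.factorial : K)) = π ((n.factorial : ℚ_[p])) := (map_natCast π _).symm
      rw [he]
      exact fun hc => hfq (hπinj (by rw [hc, map_zero]))
    have hBalt : ∀ k : ℕ, f2 (n, k)
        = (n.factorial : K)⁻¹ * t ^ n * (((descPochhammer ℤ n).coeff k : K) * ι u ^ k) := by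
      intro k
      rw [hf2def, hBdef]
      simp only [map_mul, map_inv₀, map_intCast, map_natCast, hιapp]
      ring
    rw [Finset.sum_congr rfl fun k _ => hBalt k, ← Finset.mul_sum, ← hK]
    have hmah : π (mahler n u) = ι (Ring.choose u n) := by rw [mahler_apply]; rfl
    rw [hmah]
    field_simp
  have hrow : ∀ n : ℕ, HasSum (fun k => f2 (n, k)) (π (mahler n u) * t ^ n) := by
    intro n
    have hvan : ∀ k ∉ range (n + 1), f2 (n, k) = 0 := by
      intro k hk
      rw [mem_range, not_lt] at hk
      rw [hf2def]
      simp only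
      rw [hBzero n k (by omega), zero_mul]
    have h1 := hasSum_sum_of_ne_finset_zero (f := fun k => f2 (n, k)) (L := SummationFilter.unconditional ℕ) hvan
    rwa [← hrowId n] at h1
  have hbigS : HasSum f2 (∑' nk, f2 nk) := hf2summable.hasSum
  have hrows : HasSum (fun n => π (mahler n u) * t ^ n) (∑' nk, f2 nk) :=
    hbigS.prod_fiberwise hrow
  have hFu : (∑' nk, f2 nk) = F u := hrows.unique (hFhasSum u)
  have hswap : HasSum (fun kn : ℕ × ℕ => f2 (kn.2, kn.1)) (F u) := by
    rw [hFu] at hbigS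
    exact ((Equiv.prodComm ℕ ℕ).hasSum_iff).mpr hbigS
  have hcol : ∀ k : ℕ, HasSum (fun n => f2 (n, k))
      ((∑' n, B n k) * π ((u : ℤ_[p]) : ℚ_[p]) ^ k) :=
    fun k => (hBcolSummable k).hasSum.mul_right _
  have hcols : HasSum (fun k => (∑' n, B n k) * π ((u : ℤ_[p]) : ℚ_[p]) ^ k) (F u) :=
    hswap.prod_fiberwise hcol
  -- finish
  have hval : χ (g + h) = χ g * F u := by
    rw [hmul, hFeq u, ← hu]
  have hfinal : HasSum (fun k => χ g * ((∑' n, B n k) * π ((u : ℤ_[p]) : ℚ_[p]) ^ k))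
      (χ (g + h)) := by
    rw [hval]
    exact hcols.mul_left (χ g)
  set q : K := π ((p : ℚ_[p]) ^ m) with hqdef
  have hq0 : q ≠ 0 := by
    rw [hqdef]
    intro hc
    have : ((p : ℚ_[p]) ^ m) = 0 := hπinj (by rw [hc, map_zero])
    exact pow_ne_zero m (Nat.cast_ne_zero.mpr (Fact.out : p.Prime).ne_zero) this
  have hπh : π (h : ℚ_[p]) = q * π ((u : ℤ_[p]) : ℚ_[p]) := by
    have hcast : (h : ℚ_[p]) = ((p : ℚ_[p]) ^ m) * (u : ℚ_[p]) := by
      rw [hu, hPdef]; push_cast; ring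
    rw [hcast, map_mul]
  have hterm : ∀ k : ℕ,
      χ g * q⁻¹ ^ k * (∑' n, B n k) * π (h : ℚ_[p]) ^ k
        = χ g * ((∑' n, B n k) * π ((u : ℤ_[p]) : ℚ_[p]) ^ k) := by
    intro k
    rw [hπh, mul_pow]
    have hcancel : q⁻¹ ^ k * q ^ k = 1 := by
      rw [← mul_pow, inv_mul_cancel₀ hq0, one_pow]
    calc χ g * q⁻¹ ^ k * (∑' n, B n k) * (q ^ k * π ((u : ℤ_[p]) : ℚ_[p]) ^ k)
        = χ g * ((∑' n, B n k) * π ((u : ℤ_[p]) : ℚ_[p]) ^ k) * (q⁻¹ ^ k * q ^ k) := by ring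
      _ = χ g * ((∑' n, B n k) * π ((u : ℤ_[p]) : ℚ_[p]) ^ k) := by rw [hcancel, mul_one]
  convert hfinal using 1
  funext k
  exact hterm k
end

section
/- Let χ : ℤ_p → K be a continuous function with χ(x + y) = χ(x)·χ(y) for all x, y ∈ ℤ_p, χ(0) = 1, and set z = χ(1) (so that ‖z − 1‖ < 1). Then there exists L ∈ K such that: (i) the logarithm series converges to L, i.e., the family n ↦ (−1)^n · (z − 1)^(n+1) / (n + 1) (for n ∈ ℕ) has sum L (so L = log z = ∑_{k≥1} (−1)^(k+1) (z−1)^k / k); and (ii) χ is differentiable at 0 with derivative L, i.e., the difference quotient (χ(h) − 1) / ι(h) tends to L as h tends to 0 in ℤ_p \ {0}. This is the formula (dχ_z)|₀ = log z. -/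
open Filter Topology Finset

/-- The binomial coefficient function as a function on `ℚ_[p]`. -/
noncomputable def bfun (p : ℕ) [Fact p.Prime] (k : ℕ) (y : ℚ_[p]) : ℚ_[p] :=
  (∏ j ∈ Finset.range k, (y - j)) / (k.factorial : ℚ_[p])

lemma bfun_natCast {p : ℕ} [Fact p.Prime] (k n : ℕ) :
    bfun p k (n : ℚ_[p]) = (n.choose k : ℚ_[p]) := by
  rcases le_or_gt k n with h | h
  · have hprod : (∏ j ∈ Finset.range k, ((n : ℚ_[p]) - j)) = (n.descFactorial k : ℚ_[p]) := by
      rw [Nat.descFactorial_eq_prod_range, Nat.cast_prod]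
      refine Finset.prod_congr rfl fun j hj => ?_
      rw [Nat.cast_sub (le_trans (Finset.mem_range.mp hj).le h)]
    rw [bfun, hprod, Nat.descFactorial_eq_factorial_mul_choose, Nat.cast_mul,
      mul_div_cancel_left₀ _ (by exact_mod_cast k.factorial_ne_zero)]
  · rw [bfun, Finset.prod_eq_zero (Finset.mem_range.mpr h) (by simp), zero_div,
      Nat.choose_eq_zero_of_lt h, Nat.cast_zero]

lemma continuous_bfun {p : ℕ} [Fact p.Prime] (k : ℕ) :
    Continuous fun y : ℤ_[p] => bfun p k (y : ℚ_[p]) := by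
  unfold bfun; fun_prop

lemma norm_bfun_le {p : ℕ} [Fact p.Prime] (k : ℕ) (x : ℤ_[p]) :
    ‖bfun p k (x : ℚ_[p])‖ ≤ 1 := by
  have hS : IsClosed {y : ℤ_[p] | ‖bfun p k (y : ℚ_[p])‖ ≤ 1} :=
    isClosed_le (continuous_norm.comp (continuous_bfun k)) continuous_const
  have hsub : Set.range (Nat.cast : ℕ → ℤ_[p]) ⊆ {y : ℤ_[p] | ‖bfun p k (y : ℚ_[p])‖ ≤ 1} := by
    rintro _ ⟨n, rfl⟩
    simp only [Set.mem_setOf_eq, PadicInt.coe_natCast, bfun_natCast]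
    exact_mod_cast Padic.norm_int_le_one (n.choose k : ℤ)
  have hcl : closure (Set.range (Nat.cast : ℕ → ℤ_[p])) = Set.univ :=
    PadicInt.denseRange_natCast.closure_range
  exact closure_minimal hsub hS (hcl ▸ Set.mem_univ x)

lemma bfun_succ_div {p : ℕ} [Fact p.Prime] (k : ℕ) (x : ℚ_[p]) (hx : x ≠ 0) :
    bfun p (k + 1) x / x = bfun p k (x - 1) / ((k : ℚ_[p]) + 1) := by
  have h1 : (∏ j ∈ Finset.range (k + 1), (x - j)) =
      (∏ j ∈ Finset.range k, ((x - 1) - j)) * x := by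
    rw [Finset.prod_range_succ' (fun j => x - (j : ℚ_[p])) k, Nat.cast_zero, sub_zero]
    congr 1
    refine Finset.prod_congr rfl fun j _ => ?_
    push_cast
    ring
  have hfac : ((k + 1).factorial : ℚ_[p]) = ((k : ℚ_[p]) + 1) * (k.factorial : ℚ_[p]) := by
    rw [Nat.factorial_succ]; push_cast; ring
  rw [bfun, bfun, h1, hfac]
  have h2 : (k.factorial : ℚ_[p]) ≠ 0 := by exact_mod_cast k.factorial_ne_zero
  have h3 : ((k : ℚ_[p]) + 1) ≠ 0 := Nat.cast_add_one_ne_zero k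
  field_simp

lemma bfun_neg_one {p : ℕ} [Fact p.Prime] (k : ℕ) : bfun p k (-1) = (-1) ^ k := by
  have : (∏ j ∈ Finset.range k, ((-1 : ℚ_[p]) - j)) = (-1) ^ k * (k.factorial : ℚ_[p]) := by
    have : ∀ j ∈ Finset.range k, ((-1 : ℚ_[p]) - j) = -1 * ((j : ℚ_[p]) + 1) := by
      intro j _; ring
    rw [Finset.prod_congr rfl this, Finset.prod_mul_distrib, Finset.prod_const,
      Finset.card_range]
    congr 1
    rw [← Finset.prod_range_add_one_eq_factorial k, Nat.cast_prod]
    push_cast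
    rfl
  rw [bfun, this, mul_div_assoc, div_self (by exact_mod_cast k.factorial_ne_zero), mul_one]

lemma norm_inv_natCast_le (p : ℕ) [Fact p.Prime] (n : ℕ) (hn : 0 < n) :
    ‖((n : ℚ_[p]))⁻¹‖ ≤ (n : ℝ) := by
  rw [norm_inv, Padic.norm_eq_zpow_neg_valuation (by exact_mod_cast hn.ne'), Padic.valuation_natCast,
    ← zpow_neg, neg_neg, zpow_natCast]
  exact_mod_cast Nat.le_of_dvd hn pow_padicValNat_dvd

lemma step_norm (p : ℕ) [Fact p.Prime] (K : Type*) [NormedField K] [IsUltrametricDist K]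
    [NormedAlgebra ℚ_[p] K] (hnorm : ∀ x : ℚ_[p], ‖algebraMap ℚ_[p] K x‖ = ‖x‖)
    (w : K) (hw : 1 ≤ ‖w - 1‖) : 1 ≤ ‖w ^ p - 1‖ := by
  have hp := (Fact.out : p.Prime)
  have hnormK : ∀ m : ℤ, ‖(m : K)‖ ≤ 1 := by
    intro m
    rw [← map_intCast (algebraMap ℚ_[p] K), hnorm]
    exact Padic.norm_int_le_one m
  have hpK : ‖(p : K)‖ = (p : ℝ)⁻¹ := by
    rw [← map_natCast (algebraMap ℚ_[p] K), hnorm]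
    exact Padic.norm_p
  have hpinv : (p : ℝ)⁻¹ < 1 := by
    rw [inv_lt_one_iff₀]
    right; exact_mod_cast hp.one_lt
  rcases le_or_gt ‖w‖ 1 with h1 | h1
  · have hsub : ‖w - 1‖ ≤ 1 := by
      rw [sub_eq_add_neg]
      exact (IsUltrametricDist.norm_add_le_max w (-1)).trans (by simp [h1])
    have hu : ‖w - 1‖ = 1 := le_antisymm hsub hw
    set u := w - 1 with hu'
    have hw' : w = u + 1 := by rw [hu']; ring
    obtain ⟨q, hq⟩ : ∃ q, p = q + 1 := ⟨p - 1, (Nat.succ_pred_eq_of_pos hp.pos).symm⟩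
    have hexp : w ^ p - 1 = u ^ p +
        ∑ k ∈ Finset.range q, u ^ (k + 1) * (p.choose (k + 1) : K) := by
      rw [hw', add_pow]
      rw [Finset.sum_range_succ' (fun k => u ^ k * 1 ^ (p - k) * (p.choose k : K)) p]
      simp only [pow_zero, one_mul, Nat.choose_zero_right, Nat.cast_one, mul_one, one_pow]
      have hsplit : ∑ k ∈ Finset.range p, u ^ (k + 1) * (p.choose (k + 1) : K) =
          ∑ k ∈ Finset.range q, u ^ (k + 1) * (p.choose (k + 1) : K) +
            u ^ p * (p.choose p : K) := by
        conv_lhs => rw [hq, Finset.sum_range_succ]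
        rw [← hq]
      rw [hsplit]
      simp [Nat.choose_self]
      ring
    have hrest : ‖∑ k ∈ Finset.range q, u ^ (k + 1) * (p.choose (k + 1) : K)‖ ≤
        (p : ℝ)⁻¹ := by
      apply IsUltrametricDist.norm_sum_le_of_forall_le_of_nonneg (by positivity)
      intro k hk
      rw [Finset.mem_range] at hk
      obtain ⟨m, hm⟩ := hp.dvd_choose_self (Nat.succ_ne_zero k) (by omega)
      rw [hm, Nat.cast_mul, norm_mul, norm_mul, norm_pow, hu, one_pow, one_mul, hpK]
      exact mul_le_of_le_one_right (by positivity) (by exact_mod_cast hnormK m)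
    have hup : ‖u ^ p‖ = 1 := by rw [norm_pow, hu, one_pow]
    have hne : ‖u ^ p‖ ≠ ‖∑ k ∈ Finset.range q, u ^ (k + 1) * (p.choose (k + 1) : K)‖ := by
      rw [hup]
      exact (hrest.trans_lt hpinv).ne'
    rw [hexp, IsUltrametricDist.norm_add_eq_max_of_norm_ne_norm hne, hup]
    exact le_max_left 1 _
  · have hwp : 1 < ‖w ^ p‖ := by
      rw [norm_pow]
      exact one_lt_pow₀ h1 hp.ne_zero
    have hne : ‖w ^ p‖ ≠ ‖(-1 : K)‖ := by rw [norm_neg, norm_one]; exact hwp.ne'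
    rw [sub_eq_add_neg, IsUltrametricDist.norm_add_eq_max_of_norm_ne_norm hne]
    exact le_trans hwp.le (le_max_left _ _)

/-- For a continuous character `χ` of `ℤ_p` with `z = χ 1`, the
logarithm series of `z` converges to some `L ∈ K`, and `χ` is differentiable at
`0` with derivative `L`; i.e. `(dχ_z)|₀ = log z`. -/
theorem character_derivative_at_zero_eq_log
    (p : ℕ) [Fact p.Prime]
    (K : Type*) [NormedField K] [CompleteSpace K] [IsUltrametricDist K]
    [NormedAlgebra ℚ_[p] K]
    (hnorm : ∀ x : ℚ_[p], ‖algebraMap ℚ_[p] K x‖ = ‖x‖)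
    (χ : ℤ_[p] → K) (hcont : Continuous χ)
    (hmul : ∀ x y : ℤ_[p], χ (x + y) = χ x * χ y) (h0 : χ 0 = 1)
    (z : K) (hz : z = χ 1) :
    ∃ L : K,
      HasSum (fun n : ℕ => (-1) ^ n * (z - 1) ^ (n + 1) / ((n : K) + 1)) L ∧
      Tendsto (fun h : ℤ_[p] => (χ h - 1) / algebraMap ℚ_[p] K (h : ℚ_[p]))
        (𝓝[≠] 0) (𝓝 L) := by
  set ι := algebraMap ℚ_[p] K with hι
  set t := z - 1 with ht
  have hzt : z = t + 1 := by rw [ht]; ring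
  -- χ on the naturals
  have hχn : ∀ n : ℕ, χ (n : ℤ_[p]) = z ^ n := by
    intro n
    induction n with
    | zero => simpa using h0
    | succ n ih =>
      have hcast : ((n + 1 : ℕ) : ℤ_[p]) = (n : ℤ_[p]) + 1 := by push_cast; ring
      rw [hcast, hmul, ih, ← hz, pow_succ]
  -- ‖t‖ < 1
  have htlt : ‖t‖ < 1 := by
    by_contra hge
    push_neg at hge
    have hiter : ∀ n : ℕ, 1 ≤ ‖z ^ p ^ n - 1‖ := by
      intro n
      induction n with
      | zero => simpa [ht] using hge
      | succ n ih =>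
        have hzp : z ^ p ^ (n + 1) = (z ^ p ^ n) ^ p := by rw [← pow_mul, pow_succ]
        rw [hzp]
        exact step_norm p K hnorm _ ih
    have hc0 : ContinuousAt χ 0 := hcont.continuousAt
    rw [Metric.continuousAt_iff] at hc0
    obtain ⟨δ, hδ0, hδ⟩ := hc0 1 one_pos
    have hp1 : (p : ℝ)⁻¹ < 1 := by
      rw [inv_lt_one_iff₀]
      right; exact_mod_cast (Fact.out : p.Prime).one_lt
    obtain ⟨n, hn⟩ : ∃ n : ℕ, ((p : ℝ))⁻¹ ^ n < δ := exists_pow_lt_of_lt_one hδ0 hp1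
    have hdist : dist ((p : ℤ_[p]) ^ n) 0 < δ := by
      rw [dist_zero_right, PadicInt.norm_p_pow]
      rwa [zpow_neg, zpow_natCast, ← inv_pow]
    have hlt := hδ hdist
    rw [h0, dist_eq_norm] at hlt
    have hcastp : ((p : ℤ_[p]) ^ n) = ((p ^ n : ℕ) : ℤ_[p]) := by push_cast; ring
    rw [hcastp, hχn] at hlt
    exact absurd hlt (not_lt.mpr (hiter n))
  -- summability bounds
  have hr0 : (0 : ℝ) ≤ ‖t‖ := norm_nonneg _
  have hgeom : Summable fun k : ℕ => ‖t‖ ^ k := summable_geometric_of_lt_one hr0 htlt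
  have hsum2 : Summable fun k : ℕ => ((k : ℝ) + 1) * ‖t‖ ^ (k + 1) := by
    have h1 : Summable fun k : ℕ => (k : ℝ) ^ 1 * ‖t‖ ^ k :=
      summable_pow_mul_geometric_of_norm_lt_one 1 (by rwa [Real.norm_of_nonneg hr0])
    have h2 := (_root_.summable_nat_add_iff 1).mpr h1
    refine h2.congr fun k => ?_
    push_cast
    ring
  -- the Mahler expansion of χ
  set f : ℕ → ℤ_[p] → K := fun k x => ι (bfun p k (x : ℚ_[p])) * t ^ k with hf
  have hfb : ∀ (k : ℕ) (x : ℤ_[p]), ‖f k x‖ ≤ ‖t‖ ^ k := by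
    intro k x
    rw [hf]
    simp only
    rw [norm_mul, norm_pow, hι, hnorm]
    exact mul_le_of_le_one_left (by positivity) (norm_bfun_le k x)
  have hfc : ∀ k : ℕ, Continuous (f k) := by
    intro k
    exact ((continuous_algebraMap ℚ_[p] K).comp (continuous_bfun k)).mul continuous_const
  have hfsummable : ∀ x : ℤ_[p], Summable fun k => f k x := fun x =>
    Summable.of_norm_bounded hgeom (fun k => hfb k x)
  have hF : (fun x : ℤ_[p] => ∑' k, f k x) = χ := by
    refine Continuous.ext_on (PadicInt.denseRange_natCast (p := p)) ?_ hcont ?_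
    · exact continuous_tsum hfc hgeom hfb
    · rintro _ ⟨n, rfl⟩
      show (∑' k, f k ((n : ℕ) : ℤ_[p])) = χ ((n : ℕ) : ℤ_[p])
      have hvanish : ∀ k ∉ Finset.range (n + 1), f k (n : ℤ_[p]) = 0 := by
        intro k hk
        rw [Finset.mem_range, not_lt] at hk
        rw [hf]
        simp only
        rw [PadicInt.coe_natCast, bfun_natCast, Nat.choose_eq_zero_of_lt (by omega),
          Nat.cast_zero, map_zero, zero_mul]
      rw [tsum_eq_sum hvanish, hχn, hzt, add_pow]
      refine Finset.sum_congr rfl fun k hk => ?_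
      rw [hf]
      simp only
      rw [PadicInt.coe_natCast, bfun_natCast, map_natCast]
      ring
  -- the difference quotient function
  set g : ℕ → ℤ_[p] → K := fun k x =>
    ι (bfun p k (((x - 1 : ℤ_[p]) : ℚ_[p])) / ((k : ℚ_[p]) + 1)) * t ^ (k + 1) with hg
  have hgb : ∀ (k : ℕ) (x : ℤ_[p]), ‖g k x‖ ≤ ((k : ℝ) + 1) * ‖t‖ ^ (k + 1) := by
    intro k x
    rw [hg]
    simp only
    rw [norm_mul, norm_pow, hι, hnorm, div_eq_mul_inv, norm_mul, norm_inv]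
    have h1 : ‖bfun p k (((x - 1 : ℤ_[p]) : ℚ_[p]))‖ ≤ 1 := norm_bfun_le k (x - 1)
    have h2 : ‖((k : ℚ_[p]) + 1)‖⁻¹ ≤ (k : ℝ) + 1 := by
      have h3 := norm_inv_natCast_le p (k + 1) k.succ_pos
      rw [norm_inv] at h3
      have h4 : (((k + 1 : ℕ)) : ℚ_[p]) = (k : ℚ_[p]) + 1 := by push_cast; ring
      rw [h4] at h3
      exact h3.trans_eq (by push_cast; ring)
    calc ‖bfun p k (((x - 1 : ℤ_[p]) : ℚ_[p]))‖ * ‖((k : ℚ_[p]) + 1)‖⁻¹ * ‖t‖ ^ (k + 1)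
        ≤ 1 * ((k : ℝ) + 1) * ‖t‖ ^ (k + 1) := by
          refine mul_le_mul (mul_le_mul h1 h2 (by positivity) one_pos.le) le_rfl
            (by positivity) (by positivity)
      _ = ((k : ℝ) + 1) * ‖t‖ ^ (k + 1) := by ring
  have hgc : ∀ k : ℕ, Continuous (g k) := by
    intro k
    refine (((continuous_algebraMap ℚ_[p] K).comp ?_)).mul continuous_const
    exact ((continuous_bfun k).comp (continuous_id.sub continuous_const)).div_const _
  have hgsummable : ∀ x : ℤ_[p], Summable fun k => g k x := fun x =>
    Summable.of_norm_bounded hsum2 (fun k => hgb k x)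
  set G : ℤ_[p] → K := fun x => ∑' k, g k x with hG
  have hGcont : Continuous G := continuous_tsum hgc hsum2 (fun k x => hgb k x)
  -- value at 0
  have hG0 : HasSum (fun n : ℕ => (-1) ^ n * t ^ (n + 1) / ((n : K) + 1)) (G 0) := by
    have hfun : (fun n : ℕ => (-1) ^ n * t ^ (n + 1) / ((n : K) + 1)) = fun n => g n 0 := by
      funext n
      rw [hg]
      simp only
      have hc1 : (((0 - 1 : ℤ_[p]) : ℚ_[p])) = -1 := by push_cast; ring
      rw [hc1, bfun_neg_one, map_div₀, map_pow, map_neg, map_one]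
      have hc2 : ι ((n : ℚ_[p]) + 1) = (n : K) + 1 := by
        rw [map_add, map_natCast, map_one]
      rw [hc2]
      ring
    rw [hfun]
    exact (hgsummable 0).hasSum
  -- the equality away from 0
  have hX : ∀ x : ℤ_[p], x ≠ 0 → (χ x - 1) / ι (x : ℚ_[p]) = G x := by
    intro x hx
    have hxQ : ((x : ℚ_[p])) ≠ 0 := PadicInt.coe_ne_zero.mpr hx
    have hχx : χ x = ∑' k, f k x := (congrFun hF x).symm
    have hterm0 : f 0 x = 1 := by
      rw [hf]
      simp [bfun]
    rw [hχx, (hfsummable x).tsum_eq_zero_add, hterm0, add_sub_cancel_left, hG,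
      ← tsum_div_const]
    refine tsum_congr fun k => ?_
    rw [hf, hg]
    simp only
    rw [mul_div_right_comm, ← map_div₀, bfun_succ_div k _ hxQ, PadicInt.coe_sub,
      PadicInt.coe_one]
  refine ⟨G 0, hG0, ?_⟩
  have hGat : Tendsto G (𝓝[≠] (0 : ℤ_[p])) (𝓝 (G 0)) :=
    (hGcont.tendsto 0).mono_left nhdsWithin_le_nhds
  refine hGat.congr' ?_
  filter_upwards [self_mem_nhdsWithin] with x hx
  exact (hX x hx).symm
end

section
/- Let k be a field of characteristic zero and let d, n be natural numbers. Every homogeneous polynomial of degree n in the polynomial ring k[X_1, …, X_d] lies in the k-linear span of the set of n-th powers of linear forms {(c_1 X_1 + ⋯ + c_d X_d)^n : c_1, …, c_d ∈ k}. Equivalently, the n-th symmetric power Sym^n V of a finite-dimensional k-vector space V is spanned over k by the elements β^n with β ∈ V. -/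
open MvPolynomial Finset

/-- Schinzel: Over a field `k` of characteristic zero, every
homogeneous polynomial of degree `n` in `k[X_1, …, X_d]` lies in the `k`-linear
span of the `n`-th powers of linear forms. -/
theorem homogeneous_mem_span_powers_of_linear_forms
    (k : Type*) [Field k] [CharZero k] (d n : ℕ)
    (P : MvPolynomial (Fin d) k) (hP : P.IsHomogeneous n) :
    P ∈ Submodule.span k
      {Q : MvPolynomial (Fin d) k |
        ∃ c : Fin d → k, Q = (∑ i : Fin d, C (c i) * X i) ^ n} := by
  by_contra hnot
  obtain ⟨f, hfP, hker⟩ := (Submodule.span k _).exists_dual_map_eq_bot_of_notMem hnot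
    inferInstance
  have hf0 : ∀ c : Fin d → k, f ((∑ i : Fin d, C (c i) * X i) ^ n) = 0 := by
    intro c
    have hmem : (∑ i : Fin d, C (c i) * X i) ^ n ∈ Submodule.span k
        {Q : MvPolynomial (Fin d) k |
          ∃ c : Fin d → k, Q = (∑ i : Fin d, C (c i) * X i) ^ n} :=
      Submodule.subset_span ⟨c, rfl⟩
    have := hker ▸ Submodule.mem_map_of_mem (f := f) hmem
    simpa using this
  set A := (univ : Finset (Fin d)).piAntidiag n with hA
  set Q : MvPolynomial (Fin d) k := ∑ σ ∈ A,
    monomial (Finsupp.equivFunOnFinite.symm σ)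
      ((Nat.multinomial univ σ : k) * f (monomial (Finsupp.equivFunOnFinite.symm σ) 1)) with hQ
  have hexp : ∀ c : Fin d → k, (∑ i : Fin d, C (c i) * X i) ^ n =
      ∑ σ ∈ A, (Nat.multinomial univ σ : MvPolynomial (Fin d) k) *
        ((∏ i, C (c i) ^ σ i) * monomial (Finsupp.equivFunOnFinite.symm σ) 1) := by
    intro c
    rw [Finset.sum_pow_eq_sum_piAntidiag]
    refine Finset.sum_congr rfl fun σ hσ => ?_
    congr 1
    rw [monomial_eq]
    simp only [Finsupp.prod_fintype _ _ (fun i => pow_zero _),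
      Finsupp.equivFunOnFinite_symm_apply_apply]
    rw [map_one, one_mul, ← Finset.prod_mul_distrib]
    exact Finset.prod_congr rfl fun i _ => (mul_pow _ _ _)
  have hevalQ : ∀ c : Fin d → k, eval c Q = f ((∑ i : Fin d, C (c i) * X i) ^ n) := by
    intro c
    rw [hexp c, hQ, map_sum, map_sum]
    refine Finset.sum_congr rfl fun σ hσ => ?_
    have h1 : (Nat.multinomial univ σ : MvPolynomial (Fin d) k) *
        ((∏ i, C (c i) ^ σ i) * monomial (Finsupp.equivFunOnFinite.symm σ) 1) =
        ((Nat.multinomial univ σ : k) * ∏ i, c i ^ σ i) •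
          monomial (Finsupp.equivFunOnFinite.symm σ) 1 := by
      rw [MvPolynomial.smul_eq_C_mul, map_mul, map_prod C (fun i => c i ^ σ i) univ]
      simp only [map_pow, map_natCast]
      ring
    rw [h1, map_smul, smul_eq_mul, eval_monomial]
    simp only [Finsupp.prod_fintype _ _ (fun i => pow_zero _),
      Finsupp.equivFunOnFinite_symm_apply_apply]
    ring
  have hQ0 : Q = 0 := by
    apply MvPolynomial.funext
    intro c
    rw [hevalQ c, hf0 c, map_zero]
  have hcoeff : ∀ σ ∈ A, f (monomial (Finsupp.equivFunOnFinite.symm σ) 1) = 0 := by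
    intro σ hσ
    have hc := congrArg (coeff (Finsupp.equivFunOnFinite.symm σ)) hQ0
    rw [hQ, coeff_zero, MvPolynomial.coeff_sum, Finset.sum_eq_single σ] at hc
    · rw [coeff_monomial, if_pos rfl] at hc
      have hm : ((Nat.multinomial univ σ : k)) ≠ 0 :=
        Nat.cast_ne_zero.mpr (Nat.multinomial_pos _ _).ne'
      exact (mul_eq_zero.mp hc).resolve_left hm
    · intro b hb hne
      rw [coeff_monomial, if_neg]
      exact fun h => hne (Finsupp.equivFunOnFinite.symm.injective h)
    · exact fun h => absurd hσ h
  apply hfP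
  rw [P.as_sum, map_sum]
  refine Finset.sum_eq_zero fun σ0 hσ0 => ?_
  have hdeg := hP (mem_support_iff.mp hσ0)
  have hmemA : (⇑σ0 : Fin d → ℕ) ∈ A := by
    rw [hA, mem_piAntidiag]
    refine ⟨?_, fun i _ => mem_univ i⟩
    rw [← hdeg]
    simp [Finsupp.weight_apply, Finsupp.sum_fintype]
  have h1 : f (monomial σ0 1) = 0 := by
    have := hcoeff _ hmemA
    simpa using this
  have h2 : monomial σ0 (coeff σ0 P) = coeff σ0 P • monomial σ0 1 := by
    rw [smul_monomial, smul_eq_mul, mul_one]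
  rw [h2, map_smul, h1, smul_zero]
end

section
/- Let T = Fin d → ℤ_p and let χ : T → K be a continuous function with χ(x + y) = χ(x)·χ(y) for all x, y ∈ T and χ(0) = 1. Then χ is locally ℚ_p-analytic: there exists m ∈ ℕ such that for every g ∈ T there is a family of coefficients a : (Fin d →₀ ℕ) → K with the property that for all h ∈ T with ‖h_i‖ ≤ p^(−m) for every i, the multivariate power series ∑_k a_k · ∏_i (ι(h_i))^(k_i), indexed by finitely supported multi-indices k : Fin d →₀ ℕ, converges (HasSum) to χ(g + h), where ι : ℤ_p → K is the canonical map. Hence every continuous K-valued character of a finite free ℤ_p-module is locally ℚ_p-analytic, so the group of locally ℚ_p-analytic characters coincides with the group of continuous characters. -/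
open Filter IsUltrametricDist
set_option linter.unusedSectionVars false
set_option linter.unnecessarySimpa false
set_option maxHeartbeats 1000000

namespace CCLA

variable {p : ℕ} [hp : Fact p.Prime] {K : Type*} [NormedField K] [CompleteSpace K]
  [IsUltrametricDist K] [NormedAlgebra ℚ_[p] K]

variable {p : ℕ} [hp : Fact p.Prime] {K : Type*} [NormedField K] [CompleteSpace K]
  [IsUltrametricDist K] [NormedAlgebra ℚ_[p] K]

lemma p_pos : (0:ℝ) < p := by exact_mod_cast hp.out.pos

lemma p_one_lt : (1:ℝ) < p := by exact_mod_cast hp.out.one_lt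

lemma inv_p_lt_one : (p:ℝ)⁻¹ < 1 := by
  rw [inv_lt_one_iff₀]; right; exact p_one_lt

lemma inv_p_nonneg : (0:ℝ) ≤ (p:ℝ)⁻¹ := by positivity

lemma zpow_neg_natCast (k : ℕ) : (p:ℝ)^(-(k:ℤ)) = ((p:ℝ)⁻¹)^k := by
  rw [zpow_neg, zpow_natCast, inv_pow]

/-- Ultrametric summability criterion. -/
lemma summable_of_norm_le_aux {ι : Type*} {G : ι → K} {b : ι → ℕ}
    (hfin : ∀ N : ℕ, {x | b x ≤ N}.Finite)
    (hb : ∀ x, ‖G x‖ ≤ ((p:ℝ)⁻¹) ^ (b x)) : Summable G := by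
  apply NonarchimedeanAddGroup.summable_of_tendsto_cofinite_zero
  refine Metric.tendsto_nhds.2 fun ε hε => ?_
  rw [Filter.eventually_cofinite]
  obtain ⟨N, hN⟩ := exists_pow_lt_of_lt_one hε (inv_p_lt_one (p := p))
  refine (hfin N).subset fun x hx => ?_
  simp only [Set.mem_setOf_eq] at hx ⊢
  by_contra hbx
  push_neg at hbx
  apply hx
  rw [dist_zero_right]
  calc ‖G x‖ ≤ ((p:ℝ)⁻¹) ^ (b x) := hb x
    _ ≤ ((p:ℝ)⁻¹) ^ N := pow_le_pow_of_le_one inv_p_nonneg inv_p_lt_one.le hbx.le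
    _ < ε := hN

lemma finite_pi_le (d N : ℕ) : {k : Fin d → ℕ | (∑ i, k i) ≤ N}.Finite := by
  refine (Set.Finite.pi (fun i : Fin d => Set.finite_Iic N)).subset fun k hk => ?_
  rw [Set.mem_pi]
  intro i _
  exact le_trans (Finset.single_le_sum (f := fun i => k i) (fun _ _ => Nat.zero_le _)
    (Finset.mem_univ i)) hk

/-- Product of `d` power series sums. -/
lemma prod_hasSum {d : ℕ} (F : Fin d → ℕ → K) (S : Fin d → K)
    (hS : ∀ i, HasSum (F i) (S i)) (hb : ∀ i k, ‖F i k‖ ≤ ((p:ℝ)⁻¹) ^ k) :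
    HasSum (fun k : Fin d → ℕ => ∏ i, F i (k i)) (∏ i, S i) := by
  induction d with
  | zero =>
      have h1 : (fun k : Fin 0 → ℕ => ∏ i, F i (k i)) = fun _ => (1:K) := by
        funext k; simp
      rw [h1]
      have := hasSum_single (f := fun _ : Fin 0 → ℕ => (1:K)) default
        (fun b hb => absurd (Subsingleton.elim b default) hb)
      simpa using this
  | succ d IH =>
      set F' : Fin d → ℕ → K := fun i => F i.succ with hF'
      set S' : Fin d → K := fun i => S i.succ with hS'
      have hrest : HasSum (fun k : Fin d → ℕ => ∏ i, F' i (k i)) (∏ i, S' i) :=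
        IH F' S' (fun i => hS i.succ) (fun i k => hb i.succ k)
      have hsum : Summable (fun k : Fin (d+1) → ℕ => ∏ i, F i (k i)) := by
        refine summable_of_norm_le_aux (p := p) (b := fun k => ∑ i, k i)
          (finite_pi_le (d+1)) fun k => ?_
        calc ‖∏ i, F i (k i)‖ = ∏ i, ‖F i (k i)‖ := by rw [norm_prod]
          _ ≤ ∏ i, ((p:ℝ)⁻¹) ^ (k i) :=
              Finset.prod_le_prod (fun i _ => norm_nonneg _) (fun i _ => hb i (k i))
          _ = ((p:ℝ)⁻¹) ^ (∑ i, k i) := by rw [← Finset.prod_pow_eq_pow_sum]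
      set e : (ℕ × (Fin d → ℕ)) ≃ (Fin (d+1) → ℕ) := Fin.consEquiv (fun _ => ℕ) with he
      have hkey : ∀ x : ℕ × (Fin d → ℕ),
          ((fun k : Fin (d+1) → ℕ => ∏ i, F i (k i)) ∘ e) x
            = F 0 x.1 * ∏ i, F' i (x.2 i) := by
        intro x
        simp [he, Fin.consEquiv, Fin.prod_univ_succ, hF']
      have hsum' : Summable ((fun k : Fin (d+1) → ℕ => ∏ i, F i (k i)) ∘ e) :=
        e.summable_iff.2 hsum
      rw [funext hkey] at hsum'
      have hmul := (hS 0).mul hrest hsum'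
      have : HasSum ((fun k : Fin (d+1) → ℕ => ∏ i, F i (k i)) ∘ e)
          (S 0 * ∏ i, S' i) := by rw [funext hkey]; exact hmul
      rw [e.hasSum_iff] at this
      simpa [hS', Fin.prod_univ_succ] using this

lemma norm_factorial_inv_le (n : ℕ) : ‖((n.factorial : ℚ_[p]))⁻¹‖ ≤ (p:ℝ) ^ (n:ℤ) := by
  have hne : ((n.factorial : ℚ_[p])) ≠ 0 := by
    exact_mod_cast Nat.cast_ne_zero.2 n.factorial_ne_zero
  rw [norm_inv, Padic.norm_eq_zpow_neg_valuation hne, Padic.valuation_natCast, ← zpow_neg, neg_neg]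
  have hval : padicValNat p n.factorial ≤ n := by
    have h1 := sub_one_mul_padicValNat_factorial (p := p) n
    have h2 := hp.out.two_le
    calc padicValNat p n.factorial ≤ (p - 1) * padicValNat p n.factorial :=
          Nat.le_mul_of_pos_left _ (by omega)
      _ = n - (p.digits n).sum := h1
      _ ≤ n := Nat.sub_le _ _
  exact zpow_le_zpow_right₀ (p_one_lt (p := p)).le (by exact_mod_cast hval)

lemma fwdDiff_char (F : ℤ_[p] → K) (hFm : ∀ x y, F (x+y) = F x * F y) :
    ∀ n t, (fwdDiff (1:ℤ_[p]))^[n] F t = F t * (F 1 - 1) ^ n := by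
  intro n
  induction n with
  | zero => intro t; simp
  | succ n ih =>
      intro t
      rw [Function.iterate_succ_apply', fwdDiff, ih (t+1), ih t, hFm t 1]
      ring

lemma descPochhammer_eval_cast (n : ℕ) (t : ℤ_[p]) :
    (descPochhammer ℤ_[p] n).eval t = (descPochhammer ℤ n).smeval t := by
  rw [← descPochhammer_map (Int.castRingHom ℤ_[p]) n, Polynomial.eval_map,
    ← Polynomial.eval₂_smulOneHom_eq_smeval]
  congr 1
  exact Subsingleton.elim _ _

lemma descPochhammer_eval_eq (n : ℕ) (t : ℤ_[p]) :
    (((descPochhammer ℤ_[p] n).eval t : ℤ_[p]) : ℚ_[p])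
      = (n.factorial : ℚ_[p]) * ((Ring.choose t n : ℤ_[p]) : ℚ_[p]) := by
  rw [descPochhammer_eval_cast, Ring.descPochhammer_eq_factorial_smul_choose]
  push_cast [nsmul_eq_mul]
  ring

lemma mahler_scalar (n : ℕ) (t : ℤ_[p]) :
    (n.factorial : ℚ_[p])⁻¹ * (((descPochhammer ℤ_[p] n).eval t : ℤ_[p]) : ℚ_[p])
      = mahler n t := by
  have hfac : (n.factorial : ℚ_[p]) ≠ 0 := Nat.cast_ne_zero.2 n.factorial_ne_zero
  rw [descPochhammer_eval_eq, ← mul_assoc, inv_mul_cancel₀ hfac, one_mul, mahler_apply]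


lemma arith1 (n : ℕ) : (p:ℝ)^(n:ℤ) * (((p:ℝ)⁻¹)^2)^n = ((p:ℝ)⁻¹)^n := by
  have hp0 : (p:ℝ) ≠ 0 := (p_pos (p := p)).ne'
  rw [← pow_mul, inv_pow, ← zpow_natCast (p:ℝ) (2*n), ← zpow_neg, ← zpow_add₀ hp0,
    inv_pow, ← zpow_natCast (p:ℝ) n, ← zpow_neg]
  congr 1
  push_cast
  ring

lemma one_var (hnorm : ∀ x : ℚ_[p], ‖algebraMap ℚ_[p] K x‖ = ‖x‖)
    (F : ℤ_[p] → K) (hFc : Continuous F)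
    (hFm : ∀ x y, F (x + y) = F x * F y) (hF0 : F 0 = 1)
    (hu : ‖F 1 - 1‖ ≤ ((p:ℝ)⁻¹) ^ 2) :
    ∃ A : ℕ → K, (∀ k, ‖A k‖ ≤ ((p:ℝ)⁻¹) ^ k) ∧
      ∀ t : ℤ_[p],
        HasSum (fun k => A k * (algebraMap ℚ_[p] K ((t:ℚ_[p]))) ^ k) (F t) := by
  classical
  set u : K := F 1 - 1 with hudef
  set ι : ℚ_[p] →+* K := (algebraMap ℚ_[p] K : ℚ_[p] →+* K) with hιdef
  have hιnorm : ∀ x : ℚ_[p], ‖ι x‖ = ‖x‖ := hnorm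
  set c : ℕ → ℕ → K := fun n k =>
    ι ((n.factorial : ℚ_[p])⁻¹ * (((descPochhammer ℤ_[p] n).coeff k : ℤ_[p]) : ℚ_[p])) * u ^ n
    with hcdef
  have hczero : ∀ n k, n < k → c n k = 0 := by
    intro n k hnk
    have hz : (descPochhammer ℤ_[p] n).coeff k = 0 :=
      Polynomial.coeff_eq_zero_of_natDegree_lt (by rwa [descPochhammer_natDegree])
    simp [hcdef, hz]
  have hnormc : ∀ n k, ‖c n k‖ ≤ ((p:ℝ)⁻¹) ^ n := by
    intro n k
    have h1 : ‖(((descPochhammer ℤ_[p] n).coeff k : ℤ_[p]) : ℚ_[p])‖ ≤ 1 := by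
      rw [← PadicInt.norm_def]; exact PadicInt.norm_le_one _
    calc ‖c n k‖
        = ‖(n.factorial : ℚ_[p])⁻¹‖ * ‖(((descPochhammer ℤ_[p] n).coeff k : ℤ_[p]) : ℚ_[p])‖
            * ‖u‖ ^ n := by
          simp only [hcdef]; rw [norm_mul, hιnorm, norm_mul, norm_pow]
      _ ≤ (p:ℝ) ^ (n:ℤ) * 1 * (((p:ℝ)⁻¹) ^ 2) ^ n := by
          refine mul_le_mul (mul_le_mul (norm_factorial_inv_le n) h1 (norm_nonneg _)
            (by positivity)) (pow_le_pow_left₀ (norm_nonneg _) hu n) (by positivity) (by positivity)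
      _ = ((p:ℝ)⁻¹) ^ n := by rw [mul_one]; exact arith1 n
  have hnormc' : ∀ n k, ‖c n k‖ ≤ ((p:ℝ)⁻¹) ^ k := by
    intro n k
    rcases le_or_gt k n with h | h
    · exact (hnormc n k).trans
        (pow_le_pow_of_le_one (inv_p_nonneg (p:=p)) (inv_p_lt_one (p:=p)).le h)
    · rw [hczero n k h, norm_zero]
      positivity
  have hcsum : ∀ k, Summable fun n => c n k := fun k =>
    summable_of_norm_le_aux (p := p) (b := fun n => n)
      (fun N => Set.finite_Iic N) (fun n => hnormc n k)
  set A : ℕ → K := fun k => ∑' n, c n k with hAdef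
  have hAbound : ∀ k, ‖A k‖ ≤ ((p:ℝ)⁻¹) ^ k := fun k =>
    norm_tsum_le_of_forall_le_of_nonneg (by positivity) (fun n => hnormc' n k)
  refine ⟨A, hAbound, fun t => ?_⟩
  have hpt : HasSum (fun n => ι (mahler n t) * u ^ n) (F t) := by
    letI : Module ℤ_[p] K := Module.compHom K (PadicInt.Coe.ringHom (p := p))
    haveI : IsBoundedSMul ℤ_[p] K := IsBoundedSMul.of_norm_smul_le fun c x => by
      show ‖(c:ℚ_[p]) • x‖ ≤ _
      rw [norm_smul, PadicInt.norm_def]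
    have mahl := PadicInt.hasSum_mahler (E := K) ⟨F, hFc⟩
    have h2 := (ContinuousMap.evalCLM ℚ_[p] t).hasSum mahl
    have h4 : HasSum
        (fun n => (PadicInt.mahlerTerm ((fwdDiff (1:ℤ_[p]))^[n] F 0) n : C(ℤ_[p],K)) t)
        (F t) := h2
    have h3 : ∀ n, (PadicInt.mahlerTerm ((fwdDiff (1:ℤ_[p]))^[n] F 0) n : C(ℤ_[p],K)) t
        = ι (mahler n t) * u ^ n := by
      intro n
      rw [PadicInt.mahlerTerm_apply, fwdDiff_char F hFm n 0, hF0, one_mul]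
      exact Algebra.smul_def ((mahler n t : ℤ_[p]) : ℚ_[p]) (u ^ n)
    rw [show (fun n => (PadicInt.mahlerTerm ((fwdDiff (1:ℤ_[p]))^[n] F 0) n : C(ℤ_[p],K)) t)
        = fun n => ι (mahler n t) * u ^ n from funext h3] at h4
    exact h4
  set G : ℕ × ℕ → K := fun nk => c nk.1 nk.2 * ι ((t:ℚ_[p]) ^ nk.2) with hGdef
  have hGnorm : ∀ nk : ℕ × ℕ, ‖G nk‖ ≤ ((p:ℝ)⁻¹) ^ (max nk.1 nk.2) := by
    rintro ⟨n, k⟩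
    have ht1 : ‖ι ((t:ℚ_[p]) ^ k)‖ ≤ 1 := by
      rw [hιnorm, norm_pow]
      exact pow_le_one₀ (norm_nonneg _) (by rw [← PadicInt.norm_def]; exact PadicInt.norm_le_one t)
    have hle : ‖G (n, k)‖ ≤ ‖c n k‖ := by
      simp only [hGdef]
      calc ‖c n k * ι ((t:ℚ_[p]) ^ k)‖ = ‖c n k‖ * ‖ι ((t:ℚ_[p]) ^ k)‖ := norm_mul _ _
        _ ≤ ‖c n k‖ * 1 := by gcongr
        _ = ‖c n k‖ := mul_one _
    refine hle.trans ?_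
    rcases max_cases n k with ⟨hm, _⟩ | ⟨hm, _⟩ <;> rw [hm]
    · exact hnormc n k
    · exact hnormc' n k
  have hGsum : Summable G := by
    refine summable_of_norm_le_aux (p := p) (b := fun nk => max nk.1 nk.2) (fun N => ?_) hGnorm
    refine ((Set.finite_Iic N).prod (Set.finite_Iic N)).subset fun nk hnk => ?_
    simp only [Set.mem_setOf_eq] at hnk
    simp only [Set.mem_prod, Set.mem_Iic]
    exact ⟨le_trans (le_max_left _ _) hnk, le_trans (le_max_right _ _) hnk⟩
  obtain ⟨SS, hSS⟩ := hGsum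
  have hrow : ∀ n, HasSum (fun k => G (n, k)) (ι (mahler n t) * u ^ n) := by
    intro n
    have hvan : ∀ k ∉ Finset.range (n+1), G (n, k) = 0 := by
      intro k hk
      simp only [hGdef]
      rw [hczero n k (by simpa using hk), zero_mul]
    have hsum0 := hasSum_sum_of_ne_finset_zero (f := fun k => G (n, k)) (L := SummationFilter.unconditional ℕ) hvan
    have hdeg : (descPochhammer ℤ_[p] n).natDegree < n + 1 := by
      rw [descPochhammer_natDegree]; omega
    have hcoe : ∑ k ∈ Finset.range (n+1),
        (((descPochhammer ℤ_[p] n).coeff k : ℤ_[p]) : ℚ_[p]) * ((t : ℤ_[p]) : ℚ_[p]) ^ k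
        = (((descPochhammer ℤ_[p] n).eval t : ℤ_[p]) : ℚ_[p]) := by
      calc ∑ k ∈ Finset.range (n+1),
            (((descPochhammer ℤ_[p] n).coeff k : ℤ_[p]) : ℚ_[p]) * ((t : ℤ_[p]) : ℚ_[p]) ^ k
          = ∑ k ∈ Finset.range (n+1),
            (((descPochhammer ℤ_[p] n).coeff k * t ^ k : ℤ_[p]) : ℚ_[p]) :=
            Finset.sum_congr rfl fun k _ => by push_cast; ring
        _ = ((∑ k ∈ Finset.range (n+1), (descPochhammer ℤ_[p] n).coeff k * t ^ k : ℤ_[p]) : ℚ_[p]) :=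
            (map_sum (PadicInt.Coe.ringHom (p := p))
              (fun k => (descPochhammer ℤ_[p] n).coeff k * t ^ k) (Finset.range (n+1))).symm
        _ = (((descPochhammer ℤ_[p] n).eval t : ℤ_[p]) : ℚ_[p]) := by
            rw [Polynomial.eval_eq_sum_range' hdeg t]
    have heq : ∑ k ∈ Finset.range (n+1), G (n, k) = ι (mahler n t) * u ^ n := by
      calc ∑ k ∈ Finset.range (n+1), G (n, k)
          = ι ((n.factorial : ℚ_[p])⁻¹ * ∑ k ∈ Finset.range (n+1),
              (((descPochhammer ℤ_[p] n).coeff k : ℤ_[p]) : ℚ_[p]) * (t:ℚ_[p]) ^ k) * u ^ n := by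
            rw [Finset.mul_sum, map_sum, Finset.sum_mul]
            refine Finset.sum_congr rfl fun k _ => ?_
            simp only [hGdef, hcdef, map_mul]
            ring
        _ = ι (mahler n t) * u ^ n := by rw [hcoe, mahler_scalar]
    rw [← heq]
    exact hsum0
  have hS1 : HasSum (fun n => ι (mahler n t) * u ^ n) SS := hSS.prod_fiberwise hrow
  have hSF : SS = F t := hS1.unique hpt
  have hswap : HasSum (fun nk : ℕ × ℕ => G (nk.2, nk.1)) SS :=
    ((Equiv.prodComm ℕ ℕ).hasSum_iff).2 hSS
  have hcol : ∀ k, HasSum (fun n => G (n, k)) (A k * ι ((t:ℚ_[p]) ^ k)) := fun k =>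
    (hcsum k).hasSum.mul_right _
  have final : HasSum (fun k => A k * ι ((t:ℚ_[p]) ^ k)) SS :=
    hswap.prod_fiberwise fun k => hcol k
  rw [hSF] at final
  have hfn : (fun k => A k * ι ((t:ℚ_[p]) ^ k)) = fun k => A k * (ι ((t:ℚ_[p]))) ^ k := by
    funext k; rw [map_pow]
  rwa [hfn] at final


end CCLA



/-- Every continuous `K`-valued character of `T = Fin d → ℤ_p` is
locally `ℚ_p`-analytic: there is an `m` such that around every point `g` the
character is given by a convergent multivariate power series in the `d` local
coordinates on the polydisc of radius `p^(-m)`. -/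
theorem continuous_character_locally_analytic_multivariate
    (p : ℕ) [Fact p.Prime] (d : ℕ)
    (K : Type*) [NormedField K] [CompleteSpace K] [IsUltrametricDist K]
    [NormedAlgebra ℚ_[p] K]
    (hnorm : ∀ x : ℚ_[p], ‖algebraMap ℚ_[p] K x‖ = ‖x‖)
    (χ : (Fin d → ℤ_[p]) → K) (hcont : Continuous χ)
    (hmul : ∀ x y : Fin d → ℤ_[p], χ (x + y) = χ x * χ y) (h0 : χ 0 = 1) :
    ∃ m : ℕ, ∀ g : Fin d → ℤ_[p], ∃ a : (Fin d →₀ ℕ) → K,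
      ∀ h : Fin d → ℤ_[p], (∀ i, ‖h i‖ ≤ (p : ℝ) ^ (-(m : ℤ))) →
        HasSum
          (fun k : Fin d →₀ ℕ =>
            a k * ∏ i : Fin d, (algebraMap ℚ_[p] K ((h i : ℚ_[p]))) ^ (k i))
          (χ (g + h)) := by
  classical
  have hppos : (0:ℝ) < p := CCLA.p_pos (p := p)
  have hchi_sum : ∀ (s : Finset (Fin d)) (v : Fin d → (Fin d → ℤ_[p])),
      χ (∑ i ∈ s, v i) = ∏ i ∈ s, χ (v i) := by
    intro s v
    induction s using Finset.induction_on with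
    | empty => simp [h0]
    | @insert a s ha ih => rw [Finset.sum_insert ha, Finset.prod_insert ha, hmul, ih]
  obtain ⟨δ, hδpos, hδ⟩ := Metric.continuousAt_iff.1 hcont.continuousAt
      (((p:ℝ)⁻¹) ^ 2) (by positivity)
  obtain ⟨m, hm⟩ := exists_pow_lt_of_lt_one hδpos (CCLA.inv_p_lt_one (p := p))
  have hsmall : ∀ x : Fin d → ℤ_[p], (∀ i, ‖x i‖ ≤ ((p:ℝ)⁻¹) ^ m) →
      ‖χ x - 1‖ ≤ ((p:ℝ)⁻¹) ^ 2 := by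
    intro x hx
    have hd : dist x 0 < δ := by
      refine lt_of_le_of_lt ?_ hm
      rw [dist_pi_le_iff (by positivity)]
      intro i
      rw [Pi.zero_apply, dist_zero_right]
      exact hx i
    have hh := hδ hd
    rw [dist_eq_norm, h0] at hh
    exact hh.le
  refine ⟨m, fun g => ?_⟩
  set P : ℤ_[p] := (p:ℤ_[p]) ^ m with hP
  set F : Fin d → ℤ_[p] → K := fun i s => χ (Pi.single i (P * s)) with hF
  have hFc : ∀ i, Continuous (F i) := by
    intro i
    apply hcont.comp
    refine continuous_pi fun j => ?_
    rcases eq_or_ne j i with rfl | hj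
    · simp only [Pi.single_eq_same]
      exact continuous_const.mul continuous_id
    · simp only [Pi.single_eq_of_ne hj]
      exact continuous_const
  have hFm : ∀ i x y, F i (x + y) = F i x * F i y := by
    intro i x y
    simp only [hF]
    rw [mul_add, Pi.single_add, hmul]
  have hF0 : ∀ i, F i 0 = 1 := by
    intro i
    simp only [hF, mul_zero]
    rw [Pi.single_zero, h0]
  have hFu : ∀ i, ‖F i 1 - 1‖ ≤ ((p:ℝ)⁻¹) ^ 2 := by
    intro i
    refine hsmall _ fun j => ?_
    rcases eq_or_ne j i with rfl | hj
    · rw [Pi.single_eq_same, mul_one, hP, PadicInt.norm_p_pow, CCLA.zpow_neg_natCast]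
    · rw [Pi.single_eq_of_ne hj, norm_zero]
      positivity
  choose A hAbound hAsum using fun i =>
    CCLA.one_var hnorm (F i) (hFc i) (hFm i) (hF0 i) (hFu i)
  set ιP : K := algebraMap ℚ_[p] K ((P : ℚ_[p])) with hιP
  have hnormP : ‖ιP‖ = (p:ℝ) ^ (-(m:ℤ)) := by
    rw [hιP, hnorm, ← PadicInt.norm_def, hP, PadicInt.norm_p_pow]
  have hιPne : ιP ≠ 0 := by
    intro hc
    rw [hc, norm_zero] at hnormP
    exact (ne_of_gt (zpow_pos hppos _)) hnormP.symm
  refine ⟨fun k => χ g * ∏ i, (A i (k i) * (ιP⁻¹) ^ (k i)), fun h hh => ?_⟩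
  have hdiv : ∀ i, ∃ s : ℤ_[p], h i = P * s := by
    intro i
    have h1 : h i ∈ Ideal.span {P} := by
      rw [hP, ← PadicInt.norm_le_pow_iff_mem_span_pow]
      exact hh i
    rw [Ideal.mem_span_singleton] at h1
    obtain ⟨s, hs⟩ := h1
    exact ⟨s, hs⟩
  choose ts hts using hdiv
  have hval : χ (g + h) = χ g * ∏ i, F i (ts i) := by
    rw [hmul g h]
    congr 1
    have hh1 : h = ∑ i, Pi.single i (h i) := (Finset.univ_sum_single h).symm
    conv_lhs => rw [hh1]
    rw [hchi_sum]
    refine Finset.prod_congr rfl fun i _ => ?_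
    simp only [hF]
    rw [← hts i]
  have hsplit : ∀ i, (algebraMap ℚ_[p] K ((h i : ℚ_[p])))
      = ιP * algebraMap ℚ_[p] K ((ts i : ℚ_[p])) := by
    intro i
    rw [hts i, PadicInt.coe_mul, map_mul, hιP]
  have hterm : ∀ i k, A i k * (ιP⁻¹) ^ k * (algebraMap ℚ_[p] K ((h i : ℚ_[p]))) ^ k
      = A i k * (algebraMap ℚ_[p] K ((ts i : ℚ_[p]))) ^ k := by
    intro i k
    rw [hsplit i, mul_pow, mul_assoc, ← mul_assoc ((ιP⁻¹)^k), ← mul_pow,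
      inv_mul_cancel₀ hιPne, one_pow, one_mul]
  have hbigs : HasSum
      (fun k : Fin d → ℕ => ∏ i, (A i (k i) * (algebraMap ℚ_[p] K ((ts i : ℚ_[p]))) ^ (k i)))
      (∏ i, F i (ts i)) := by
    refine CCLA.prod_hasSum (p := p)
      (fun i k => A i k * (algebraMap ℚ_[p] K ((ts i : ℚ_[p]))) ^ k)
      (fun i => F i (ts i)) (fun i => hAsum i (ts i)) ?_
    intro i k
    rw [norm_mul, norm_pow, hnorm, ← PadicInt.norm_def]
    calc ‖A i k‖ * ‖ts i‖ ^ k ≤ ((p:ℝ)⁻¹) ^ k * 1 := by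
          refine mul_le_mul (hAbound i k)
            (pow_le_one₀ (norm_nonneg _) (PadicInt.norm_le_one _)) (by positivity) (by positivity)
      _ = ((p:ℝ)⁻¹) ^ k := mul_one _
  have hbig2 := hbigs.mul_left (χ g)
  rw [← hval] at hbig2
  have hfun : (fun k : Fin d → ℕ =>
        χ g * ∏ i, (A i (k i) * (algebraMap ℚ_[p] K ((ts i : ℚ_[p]))) ^ (k i)))
      = fun k : Fin d → ℕ => (χ g * ∏ i, (A i (k i) * (ιP⁻¹) ^ (k i)))
          * ∏ i, (algebraMap ℚ_[p] K ((h i : ℚ_[p]))) ^ (k i) := by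
    funext k
    rw [mul_assoc, ← Finset.prod_mul_distrib]
    congr 1
    exact Finset.prod_congr rfl fun i _ => (hterm i (k i)).symm
  rw [hfun] at hbig2
  have hres : HasSum ((fun kk : Fin d → ℕ =>
      (χ g * ∏ i, (A i (kk i) * (ιP⁻¹) ^ (kk i)))
        * ∏ i, (algebraMap ℚ_[p] K ((h i : ℚ_[p]))) ^ (kk i))
        ∘ ⇑(Finsupp.equivFunOnFinite (α := Fin d) (M := ℕ)))
      (χ (g + h)) := (Finsupp.equivFunOnFinite (α := Fin d) (M := ℕ)).hasSum_iff.2 hbig2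
  exact hres
end
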